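/- arXiv:math/9801096 — 4 statements merged into one kernel-verified Lean document; each statement's English description precedes it below -/
import Mathlib

section
/- In a non-degenerate RiFle assignment game, the set of stable outcomes is a compact lattice under P-preferences; in particular there exist a unique P-optimal stable outcome (simultaneously maximizing all u_i and minimizing all v_j among stable outcomes) and a unique Q-optimal stable outcome. -/
open Finset

/-- The RiFle assignment game: `n` P-agents and `n` Q-agents, prescribed payoff
shares `β i j` (to `p i`) and `γ i j` (to `q j`), each agent rigid or flexible. -/
structure RiFle (n : ℕ) where
  β : Fin n → Fin n → ℝ
  γ : Fin n → Fin n → ℝ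
  β_nonneg : ∀ i j, 0 ≤ β i j
  γ_nonneg : ∀ i j, 0 ≤ γ i j
  rigidP : Fin n → Prop
  rigidQ : Fin n → Prop

namespace RiFle

variable {n : ℕ}

/-- Joint productivity of a pair. -/
def α (G : RiFle n) (i j : Fin n) : ℝ := G.β i j + G.γ i j

/-- A pair is rigid if at least one of its members is rigid. -/
def RigidPair (G : RiFle n) (i j : Fin n) : Prop := G.rigidP i ∨ G.rigidQ j

/-- A (partial) matching of P-agents to Q-agents, given as a partial map from P to Q
that is injective on matched agents. -/
def Matching (μ : Fin n → Option (Fin n)) : Prop :=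
  ∀ i i' j, μ i = some j → μ i' = some j → i = i'

/-- Feasibility of an outcome: individual rationality, rigidity, and Pareto optimality. -/
def Feasible (G : RiFle n) (μ : Fin n → Option (Fin n)) (u v : Fin n → ℝ) : Prop :=
  Matching μ ∧
  (∀ i, 0 ≤ u i) ∧ (∀ j, 0 ≤ v j) ∧
  (∀ i j, μ i = some j → G.rigidP i → u i = G.β i j ∧ (¬ G.rigidQ j → G.γ i j ≤ v j)) ∧
  (∀ i j, μ i = some j → G.rigidQ j → v j = G.γ i j ∧ (¬ G.rigidP i → G.β i j ≤ u i)) ∧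
  ((∑ i, u i) + (∑ j, v j) = ∑ i, (μ i).elim 0 (fun j => G.α i j))

/-- Stability: feasibility plus absence of blocking pairs. -/
def Stable (G : RiFle n) (μ : Fin n → Option (Fin n)) (u v : Fin n → ℝ) : Prop :=
  G.Feasible μ u v ∧
  (∀ i j, ¬ G.RigidPair i j → G.α i j ≤ u i + v j) ∧
  (∀ i j, G.RigidPair i j → G.β i j ≤ u i ∨ G.γ i j ≤ v j)

end RiFle
namespace RiFle

variable {n : ℕ}

/-- The total payoff to a coalition `(CP, CQ)` under `μ` is forced if every matched
pair crossing the boundary of the coalition is rigid. -/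
def Forced (G : RiFle n) (μ : Fin n → Option (Fin n)) (CP CQ : Finset (Fin n)) : Prop :=
  ∀ i j, μ i = some j → ((i ∈ CP ∧ j ∉ CQ) ∨ (i ∉ CP ∧ j ∈ CQ)) → G.RigidPair i j

/-- The forced total payoff to a coalition. -/
def ForcedPay (G : RiFle n) (μ : Fin n → Option (Fin n)) (CP CQ : Finset (Fin n)) : ℝ :=
  (∑ i ∈ CP, (μ i).elim 0 (fun j => G.β i j)) +
  (∑ i : Fin n, (μ i).elim 0 (fun j => if j ∈ CQ then G.γ i j else 0))

/-- Non-degeneracy: for any two matchings and any minimal nonempty coalition whose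
payoff is forced under both, equality of the forced payoffs implies that the two
matchings coincide on the coalition. -/
def NonDegenerate (G : RiFle n) : Prop :=
  ∀ (μ μ' : Fin n → Option (Fin n)) (CP CQ : Finset (Fin n)),
    Matching μ → Matching μ' →
    G.Forced μ CP CQ → G.Forced μ' CP CQ →
    (CP.Nonempty ∨ CQ.Nonempty) →
    (∀ CP' CQ' : Finset (Fin n), CP' ⊆ CP → CQ' ⊆ CQ → (CP' ≠ CP ∨ CQ' ≠ CQ) →
      (CP'.Nonempty ∨ CQ'.Nonempty) → ¬ (G.Forced μ CP' CQ' ∧ G.Forced μ' CP' CQ')) →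
    G.ForcedPay μ CP CQ = G.ForcedPay μ' CP CQ →
    (∀ i ∈ CP, μ i = μ' i) ∧ (∀ i j, j ∈ CQ → (μ i = some j ↔ μ' i = some j))

end RiFle


-- ===== module M1 =====

open Finset
namespace RiFle

variable {n : ℕ} {G : RiFle n} {μ μ' : Fin n → Option (Fin n)} {u v u' v' : Fin n → ℝ}

/-- Pairwise form of stability. -/
structure IsPW (G : RiFle n) (μ : Fin n → Option (Fin n)) (u v : Fin n → ℝ) : Prop where
  matching : Matching μ
  u_nonneg : ∀ i, 0 ≤ u i
  v_nonneg : ∀ j, 0 ≤ v j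
  u_unm : ∀ i, μ i = none → u i = 0
  v_unm : ∀ j, (∀ i, μ i ≠ some j) → v j = 0
  pair_sum : ∀ i j, μ i = some j → u i + v j = G.α i j
  pair_rp : ∀ i j, μ i = some j → G.rigidP i → u i = G.β i j
  pair_rq : ∀ i j, μ i = some j → G.rigidQ j → v j = G.γ i j
  nb_flex : ∀ i j, ¬ G.RigidPair i j → G.α i j ≤ u i + v j
  nb_rig : ∀ i j, G.RigidPair i j → G.β i j ≤ u i ∨ G.γ i j ≤ v j

lemma elim_eq_sum (o : Option (Fin n)) (f : Fin n → ℝ) :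
    o.elim 0 f = ∑ j, if o = some j then f j else 0 := by
  cases o with
  | none => simp
  | some j =>
      rw [show (fun j' => if some j = some j' then f j' else 0)
            = fun j' => if j = j' then f j' else 0 by funext j'; simp [eq_comm]]
      simp [Finset.sum_ite_eq]

open scoped Classical in
lemma Matching.sum_elim (hμ : Matching μ) (f : Fin n → ℝ) :
    ∑ i, (μ i).elim 0 f = ∑ j, if ∃ i, μ i = some j then f j else 0 := by
  have h1 : ∀ i : Fin n, (μ i).elim 0 f = ∑ j, if μ i = some j then f j else 0 :=
    fun i => elim_eq_sum (μ i) f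
  rw [Finset.sum_congr rfl (fun i _ => h1 i), Finset.sum_comm]
  refine Finset.sum_congr rfl (fun j _ => ?_)
  by_cases h : ∃ i, μ i = some j
  · obtain ⟨i0, hi0⟩ := h
    rw [if_pos ⟨i0, hi0⟩, Finset.sum_eq_single i0]
    · simp [hi0]
    · intro i _ hne
      rw [if_neg]
      intro hc
      exact hne (hμ i i0 j hc hi0)
    · simp
  · rw [if_neg h]
    exact Finset.sum_eq_zero (fun i _ => by
      rw [if_neg (fun hc => h ⟨i, hc⟩)])

open scoped Classical in
lemma Matching.sum_v (hμ : Matching μ) (v : Fin n → ℝ)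
    (hv : ∀ j, (∀ i, μ i ≠ some j) → v j = 0) :
    ∑ i, (μ i).elim 0 v = ∑ j, v j := by
  rw [hμ.sum_elim v]
  refine Finset.sum_congr rfl (fun j _ => ?_)
  by_cases h : ∃ i, μ i = some j
  · rw [if_pos h]
  · rw [if_neg h, eq_comm]
    exact hv j (fun i hc => h ⟨i, hc⟩)

lemma sum_u (u : Fin n → ℝ) (hu : ∀ i, μ i = none → u i = 0) :
    ∑ i, (μ i).elim 0 (fun _ => u i) = ∑ i, u i := by
  refine Finset.sum_congr rfl (fun i _ => ?_)
  cases h : μ i with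
  | none => simp [hu i h]
  | some j => simp

/-- matched rigid pairs split exactly `(β, γ)`. -/
lemma IsPW.pair_exact (h : G.IsPW μ u v) {i j : Fin n} (hm : μ i = some j)
    (hr : G.RigidPair i j) : u i = G.β i j ∧ v j = G.γ i j := by
  have hs := h.pair_sum i j hm
  rcases hr with hp | hq
  · have hu := h.pair_rp i j hm hp
    refine ⟨hu, ?_⟩
    have hα : G.α i j = G.β i j + G.γ i j := rfl
    linarith
  · have hv := h.pair_rq i j hm hq
    refine ⟨?_, hv⟩
    have hα : G.α i j = G.β i j + G.γ i j := rfl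
    linarith

lemma IsPW.stable (h : G.IsPW μ u v) : G.Stable μ u v := by
  refine ⟨⟨h.matching, h.u_nonneg, h.v_nonneg, ?_, ?_, ?_⟩, h.nb_flex, h.nb_rig⟩
  · intro i j hm hp
    obtain ⟨hu, hv⟩ := h.pair_exact hm (Or.inl hp)
    exact ⟨hu, fun _ => le_of_eq hv.symm⟩
  · intro i j hm hq
    obtain ⟨hu, hv⟩ := h.pair_exact hm (Or.inr hq)
    exact ⟨hv, fun _ => le_of_eq hu.symm⟩
  · rw [← sum_u u h.u_unm, ← h.matching.sum_v v h.v_unm, ← Finset.sum_add_distrib]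
    refine Finset.sum_congr rfl (fun i _ => ?_)
    cases hm : μ i with
    | none => simp
    | some j => simpa using h.pair_sum i j hm

open scoped Classical in
lemma Stable.isPW (h : G.Stable μ u v) : G.IsPW μ u v := by
  obtain ⟨⟨hμ, hu0, hv0, hrp, hrq, hagg⟩, hnbf, hnbr⟩ := h
  -- matched pairs earn at least α
  have hge : ∀ i j, μ i = some j → G.α i j ≤ u i + v j := by
    intro i j hm
    by_cases hr : G.RigidPair i j
    · rcases hr with hp | hq
      · obtain ⟨hu, hv⟩ := hrp i j hm hp
        by_cases hq : G.rigidQ j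
        · obtain ⟨hv', _⟩ := hrq i j hm hq
          simp [RiFle.α, hu, hv']
        · have := hv hq
          simp only [RiFle.α, hu]
          linarith
      · obtain ⟨hv, hu⟩ := hrq i j hm hq
        by_cases hp : G.rigidP i
        · obtain ⟨hu', _⟩ := hrp i j hm hp
          simp [RiFle.α, hu', hv]
        · have := hu hp
          simp only [RiFle.α, hv]
          linarith
    · exact hnbf i j hr
  -- slack functions
  set s : Fin n → ℝ := fun i => (μ i).elim 0 (fun j => u i + v j - G.α i j) with hs
  set e : Fin n → ℝ := fun i => if μ i = none then u i else 0 with he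
  set q : Fin n → ℝ := fun j => if ∃ i, μ i = some j then 0 else v j with hq
  have hs0 : ∀ i, 0 ≤ s i := by
    intro i
    cases hm : μ i with
    | none => simp [hs, hm]
    | some j => simp only [hs, hm, Option.elim]; linarith [hge i j hm]
  have he0 : ∀ i, 0 ≤ e i := by
    intro i; by_cases hm : μ i = none <;> simp [he, hm, hu0 i]
  have hq0 : ∀ j, 0 ≤ q j := by
    intro j; by_cases hm : ∃ i, μ i = some j <;> simp [hq, hm, hv0 j]
  have hsum : (∑ i, s i) + ((∑ i, e i) + (∑ j, q j)) = 0 := by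
    have h1 : ∀ i : Fin n, s i = ((μ i).elim 0 (fun _ => u i) + (μ i).elim 0 v)
        - (μ i).elim 0 (fun j => G.α i j) := by
      intro i; cases hm : μ i <;> simp [hs, hm]
    have h2 : ∀ i : Fin n, (μ i).elim 0 (fun _ => u i) = u i - e i := by
      intro i; cases hm : μ i <;> simp [he, hm]
    have h3 : ∑ i, (μ i).elim 0 v = (∑ j, v j) - ∑ j, q j := by
      rw [hμ.sum_elim v, ← Finset.sum_sub_distrib]
      refine Finset.sum_congr rfl (fun j _ => ?_)
      by_cases hm : ∃ i, μ i = some j <;> simp [hq, hm]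
    have hA : ∑ i, s i = (∑ i, ((μ i).elim 0 fun _ => u i)) + (∑ i, (μ i).elim 0 v)
        - ∑ i, (μ i).elim 0 (fun j => G.α i j) := by
      rw [Finset.sum_congr rfl (fun i _ => h1 i), Finset.sum_sub_distrib,
        Finset.sum_add_distrib]
    have hB : ∑ i, ((μ i).elim 0 fun _ => u i) = (∑ i, u i) - ∑ i, e i := by
      rw [Finset.sum_congr rfl (fun i _ => h2 i), Finset.sum_sub_distrib]
    rw [hA, hB, h3]
    linarith [hagg]
  have hzero : (∀ i, s i = 0) ∧ (∀ i, e i = 0) ∧ (∀ j, q j = 0) := by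
    have hS : ∑ i, s i = 0 ∧ ((∑ i, e i) + (∑ j, q j)) = 0 := by
      constructor <;>
        [nlinarith [Finset.sum_nonneg (fun i (_ : i ∈ univ) => hs0 i),
          Finset.sum_nonneg (fun i (_ : i ∈ univ) => he0 i),
          Finset.sum_nonneg (fun j (_ : j ∈ univ) => hq0 j)];
        nlinarith [Finset.sum_nonneg (fun i (_ : i ∈ univ) => hs0 i),
          Finset.sum_nonneg (fun i (_ : i ∈ univ) => he0 i),
          Finset.sum_nonneg (fun j (_ : j ∈ univ) => hq0 j)]]
    have hE : ∑ i, e i = 0 ∧ ∑ j, q j = 0 := by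
      constructor <;>
        nlinarith [Finset.sum_nonneg (fun i (_ : i ∈ univ) => he0 i),
          Finset.sum_nonneg (fun j (_ : j ∈ univ) => hq0 j), hS.2]
    refine ⟨?_, ?_, ?_⟩
    · intro i
      have := (Finset.sum_eq_zero_iff_of_nonneg (fun i (_ : i ∈ univ) => hs0 i)).1 hS.1
      exact this i (mem_univ i)
    · intro i
      have := (Finset.sum_eq_zero_iff_of_nonneg (fun i (_ : i ∈ univ) => he0 i)).1 hE.1
      exact this i (mem_univ i)
    · intro j
      have := (Finset.sum_eq_zero_iff_of_nonneg (fun j (_ : j ∈ univ) => hq0 j)).1 hE.2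
      exact this j (mem_univ j)
  refine ⟨hμ, hu0, hv0, ?_, ?_, ?_, ?_, ?_, hnbf, hnbr⟩
  · intro i hm
    have := hzero.2.1 i
    simpa [he, hm] using this
  · intro j hm
    have := hzero.2.2 j
    have hne : ¬ ∃ i, μ i = some j := fun ⟨i, hc⟩ => hm i hc
    simpa [hq, hne] using this
  · intro i j hm
    have := hzero.1 i
    simp only [hs, hm, Option.elim] at this
    linarith
  · intro i j hm hp
    exact (hrp i j hm hp).1
  · intro i j hm hq'
    exact (hrq i j hm hq').1

lemma stable_iff_isPW : G.Stable μ u v ↔ G.IsPW μ u v :=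
  ⟨Stable.isPW, IsPW.stable⟩

end RiFle

-- ===== module M2 =====

open Finset
namespace RiFle

variable {n : ℕ} {G : RiFle n} {μ μ' : Fin n → Option (Fin n)} {u v u' v' : Fin n → ℝ}
variable {CP CQ CP' CQ' : Finset (Fin n)}

open scoped Classical in
/-- For a forced coalition, the forced pay equals the actual pay. -/
lemma IsPW.forcedPay_eq (h : G.IsPW μ u v) (hf : G.Forced μ CP CQ) :
    G.ForcedPay μ CP CQ = (∑ i ∈ CP, u i) + (∑ j ∈ CQ, v j) := by
  have key : ∀ i, (if i ∈ CP then (μ i).elim 0 (G.β i) else 0)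
      + (μ i).elim 0 (fun j => if j ∈ CQ then G.γ i j else 0)
      = (if i ∈ CP then u i else 0)
        + (μ i).elim 0 (fun j => if j ∈ CQ then v j else 0) := by
    intro i
    cases hm : μ i with
    | none =>
        by_cases hi : i ∈ CP <;> simp [hi, hm, h.u_unm i hm]
    | some j =>
        by_cases hi : i ∈ CP <;> by_cases hj : j ∈ CQ <;>
          simp only [hm, Option.elim, if_pos, if_neg, hi, hj, if_true, if_false]
        · -- in-in : β + γ = u + v
          have hs := h.pair_sum i j hm
          have hα : G.α i j = G.β i j + G.γ i j := rfl
          linarith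
        · -- in-out : crossing, rigid, u = β
          have hr := hf i j hm (Or.inl ⟨hi, hj⟩)
          have := (h.pair_exact hm hr).1
          linarith
        · -- out-in : crossing, rigid, v = γ
          have hr := hf i j hm (Or.inr ⟨hi, hj⟩)
          have := (h.pair_exact hm hr).2
          linarith
  have hsecond : ∑ i, (μ i).elim 0 (fun j => if j ∈ CQ then v j else 0)
      = ∑ j ∈ CQ, v j := by
    rw [h.matching.sum_elim (fun j => if j ∈ CQ then v j else 0)]
    rw [show (∑ j ∈ CQ, v j) = ∑ j, if j ∈ CQ then v j else 0 by
      rw [Finset.sum_ite_mem, Finset.univ_inter]]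
    refine Finset.sum_congr rfl (fun j _ => ?_)
    by_cases hj : j ∈ CQ
    · by_cases hm : ∃ i, μ i = some j
      · simp [hj, hm]
      · simp [hj, hm, h.v_unm j (fun i hc => hm ⟨i, hc⟩)]
    · simp [hj]
  have hfirst : (∑ i ∈ CP, (μ i).elim 0 (G.β i))
      = ∑ i, if i ∈ CP then (μ i).elim 0 (G.β i) else 0 := by
    rw [Finset.sum_ite_mem, Finset.univ_inter]
  have hfirst' : (∑ i ∈ CP, u i) = ∑ i, if i ∈ CP then u i else 0 := by
    rw [Finset.sum_ite_mem, Finset.univ_inter]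
  unfold ForcedPay
  rw [hfirst, hfirst', ← hsecond, ← Finset.sum_add_distrib, ← Finset.sum_add_distrib]
  exact Finset.sum_congr rfl (fun i _ => key i)

/-- forcedness is preserved under relative complements. -/
lemma Forced.sdiff (hf : G.Forced μ CP CQ) (hf' : G.Forced μ CP' CQ')
    (hP : CP' ⊆ CP) (hQ : CQ' ⊆ CQ) : G.Forced μ (CP \ CP') (CQ \ CQ') := by
  intro i j hm hcross
  rcases hcross with ⟨hi, hj⟩ | ⟨hi, hj⟩
  · rw [Finset.mem_sdiff] at hi
    by_cases hj' : j ∈ CQ'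
    · exact hf' i j hm (Or.inr ⟨hi.2, hj'⟩)
    · have : j ∉ CQ := by
        intro hc
        exact hj (Finset.mem_sdiff.2 ⟨hc, hj'⟩)
      exact hf i j hm (Or.inl ⟨hi.1, this⟩)
  · rw [Finset.mem_sdiff] at hj
    by_cases hi' : i ∈ CP'
    · exact hf' i j hm (Or.inl ⟨hi', hj.2⟩)
    · have : i ∉ CP := by
        intro hc
        exact hi (Finset.mem_sdiff.2 ⟨hc, hi'⟩)
      exact hf i j hm (Or.inr ⟨this, hj.1⟩)

/-- KEY: forced coalitions on which the payoffs agree have equal matchings. -/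
lemma key_agree (hnd : G.NonDegenerate) (h : G.IsPW μ u v) (h' : G.IsPW μ' u' v') :
    ∀ CP CQ : Finset (Fin n), G.Forced μ CP CQ → G.Forced μ' CP CQ →
    (∀ i ∈ CP, u i = u' i) → (∀ j ∈ CQ, v j = v' j) →
    (∀ i ∈ CP, μ i = μ' i) ∧ (∀ i j, j ∈ CQ → (μ i = some j ↔ μ' i = some j)) := by
  suffices H : ∀ N : ℕ, ∀ CP CQ : Finset (Fin n), CP.card + CQ.card = N →
      G.Forced μ CP CQ → G.Forced μ' CP CQ →
      (∀ i ∈ CP, u i = u' i) → (∀ j ∈ CQ, v j = v' j) →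
      (∀ i ∈ CP, μ i = μ' i) ∧ (∀ i j, j ∈ CQ → (μ i = some j ↔ μ' i = some j)) by
    intro CP CQ
    exact H _ CP CQ rfl
  intro N
  induction N using Nat.strong_induction_on with
  | _ N IH =>
    intro CP CQ hN hf hf' hu hv
    by_cases hne : CP.Nonempty ∨ CQ.Nonempty
    · by_cases hmin : ∃ CP' CQ' : Finset (Fin n), CP' ⊆ CP ∧ CQ' ⊆ CQ ∧
        (CP' ≠ CP ∨ CQ' ≠ CQ) ∧ (CP'.Nonempty ∨ CQ'.Nonempty) ∧
        G.Forced μ CP' CQ' ∧ G.Forced μ' CP' CQ'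
      · obtain ⟨CP', CQ', hPs, hQs, hneq, hne', hg, hg'⟩ := hmin
        have hd : G.Forced μ (CP \ CP') (CQ \ CQ') := hf.sdiff hg hPs hQs
        have hd' : G.Forced μ' (CP \ CP') (CQ \ CQ') := hf'.sdiff hg' hPs hQs
        have hcard1 : CP'.card + CQ'.card < N := by
          rcases hneq with hx | hx
          · have h1 : CP'.card < CP.card := Finset.card_lt_card (hPs.ssubset_of_ne hx)
            have h2 : CQ'.card ≤ CQ.card := Finset.card_le_card hQs
            omega
          · have h1 : CP'.card ≤ CP.card := Finset.card_le_card hPs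
            have h2 : CQ'.card < CQ.card := Finset.card_lt_card (hQs.ssubset_of_ne hx)
            omega
        have hcard2 : (CP \ CP').card + (CQ \ CQ').card < N := by
          rw [Finset.card_sdiff_of_subset hPs, Finset.card_sdiff_of_subset hQs]
          have h1 : CP'.card ≤ CP.card := Finset.card_le_card hPs
          have h2 : CQ'.card ≤ CQ.card := Finset.card_le_card hQs
          have h3 : 0 < CP'.card + CQ'.card := by
            rcases hne' with hx | hx
            · have := Finset.card_pos.2 hx; omega
            · have := Finset.card_pos.2 hx; omega
          omega
        have r1 := IH _ hcard1 CP' CQ' rfl hg hg'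
          (fun i hi => hu i (hPs hi)) (fun j hj => hv j (hQs hj))
        have r2 := IH _ hcard2 (CP \ CP') (CQ \ CQ') rfl hd hd'
          (fun i hi => hu i (Finset.mem_sdiff.1 hi).1)
          (fun j hj => hv j (Finset.mem_sdiff.1 hj).1)
        constructor
        · intro i hi
          by_cases hi' : i ∈ CP'
          · exact r1.1 i hi'
          · exact r2.1 i (Finset.mem_sdiff.2 ⟨hi, hi'⟩)
        · intro i j hj
          by_cases hj' : j ∈ CQ'
          · exact r1.2 i j hj'
          · exact r2.2 i j (Finset.mem_sdiff.2 ⟨hj, hj'⟩)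
      · push_neg at hmin
        have hpay : G.ForcedPay μ CP CQ = G.ForcedPay μ' CP CQ := by
          rw [h.forcedPay_eq hf, h'.forcedPay_eq hf']
          rw [Finset.sum_congr rfl (fun i hi => hu i hi),
            Finset.sum_congr rfl (fun j hj => hv j hj)]
        exact hnd μ μ' CP CQ h.matching h'.matching hf hf' hne
          (fun CP' CQ' hP hQ hne1 hne2 hc =>
            hmin CP' CQ' hP hQ hne1 hne2 hc.1 hc.2) hpay
    · push_neg at hne
      obtain ⟨hP, hQ⟩ := hne
      subst hP; subst hQ
      exact ⟨fun i hi => absurd hi (Finset.notMem_empty i),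
        fun i j hj => absurd hj (Finset.notMem_empty j)⟩

/-- The matching in a stable outcome is determined by the payoffs. -/
lemma matching_eq_of_payoff_eq (hnd : G.NonDegenerate)
    (h : G.IsPW μ u v) (h' : G.IsPW μ' u v) : μ = μ' := by
  have hf : G.Forced μ Finset.univ Finset.univ := by
    intro i j hm hcross
    rcases hcross with ⟨_, hj⟩ | ⟨hi, _⟩
    · exact absurd (Finset.mem_univ j) hj
    · exact absurd (Finset.mem_univ i) hi
  have hf' : G.Forced μ' Finset.univ Finset.univ := by
    intro i j hm hcross
    rcases hcross with ⟨_, hj⟩ | ⟨hi, _⟩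
    · exact absurd (Finset.mem_univ j) hj
    · exact absurd (Finset.mem_univ i) hi
  have := key_agree hnd h h' Finset.univ Finset.univ hf hf'
    (fun _ _ => rfl) (fun _ _ => rfl)
  funext i
  exact this.1 i (Finset.mem_univ i)

end RiFle

-- ===== module M3 =====

open Finset
namespace RiFle

variable {n : ℕ} {G : RiFle n} {μ : Fin n → Option (Fin n)} {u v : Fin n → ℝ}

/-- A crude bound for all payoffs. -/
noncomputable def bnd (G : RiFle n) : ℝ := ∑ i, ∑ j, G.α i j

lemma α_nonneg (G : RiFle n) (i j : Fin n) : 0 ≤ G.α i j :=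
  add_nonneg (G.β_nonneg i j) (G.γ_nonneg i j)

lemma bnd_nonneg (G : RiFle n) : 0 ≤ G.bnd :=
  Finset.sum_nonneg fun i _ => Finset.sum_nonneg fun j _ => G.α_nonneg i j

lemma α_le_bnd (G : RiFle n) (i j : Fin n) : G.α i j ≤ G.bnd := by
  have h1 : G.α i j ≤ ∑ j', G.α i j' :=
    Finset.single_le_sum (fun j' _ => G.α_nonneg i j') (mem_univ j)
  have h2 : (∑ j', G.α i j') ≤ G.bnd :=
    Finset.single_le_sum (fun i' (_ : i' ∈ univ) =>
      Finset.sum_nonneg fun j' _ => G.α_nonneg i' j') (mem_univ i)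
  linarith

lemma IsPW.u_le_bnd (h : G.IsPW μ u v) (i : Fin n) : u i ≤ G.bnd := by
  cases hm : μ i with
  | none => rw [h.u_unm i hm]; exact G.bnd_nonneg
  | some j =>
      have := h.pair_sum i j hm
      have := h.v_nonneg j
      have := G.α_le_bnd i j
      linarith

lemma IsPW.v_le_bnd (h : G.IsPW μ u v) (j : Fin n) : v j ≤ G.bnd := by
  by_cases hm : ∃ i, μ i = some j
  · obtain ⟨i, hi⟩ := hm
    have := h.pair_sum i j hi
    have := h.u_nonneg i
    have := G.α_le_bnd i j
    linarith
  · rw [h.v_unm j (fun i hc => hm ⟨i, hc⟩)]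
    exact G.bnd_nonneg

section Closed

lemma isClosed_imp {X : Type*} [TopologicalSpace X] (C : Prop) {S : Set X}
    (hS : IsClosed S) : IsClosed {p : X | C → p ∈ S} := by
  by_cases hC : C
  · simpa [hC] using hS
  · simp [hC]

lemma isClosed_PW (G : RiFle n) (μ : Fin n → Option (Fin n)) :
    IsClosed {p : (Fin n → ℝ) × (Fin n → ℝ) | G.IsPW μ p.1 p.2} := by
  have cu : ∀ i : Fin n, Continuous fun p : (Fin n → ℝ) × (Fin n → ℝ) => p.1 i :=
    fun i => (continuous_apply i).comp continuous_fst
  have cv : ∀ j : Fin n, Continuous fun p : (Fin n → ℝ) × (Fin n → ℝ) => p.2 j :=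
    fun j => (continuous_apply j).comp continuous_snd
  have heq : {p : (Fin n → ℝ) × (Fin n → ℝ) | G.IsPW μ p.1 p.2} =
      {p : (Fin n → ℝ) × (Fin n → ℝ) | Matching μ} ∩
      ((⋂ i, {p | 0 ≤ p.1 i}) ∩ (⋂ j, {p | 0 ≤ p.2 j}) ∩
       (⋂ i, {p | μ i = none → p.1 i = 0}) ∩
       (⋂ j, {p | (∀ i, μ i ≠ some j) → p.2 j = 0}) ∩
       (⋂ i, ⋂ j, {p | μ i = some j → p.1 i + p.2 j = G.α i j}) ∩
       (⋂ i, ⋂ j, {p | μ i = some j → G.rigidP i → p.1 i = G.β i j}) ∩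
       (⋂ i, ⋂ j, {p | μ i = some j → G.rigidQ j → p.2 j = G.γ i j}) ∩
       (⋂ i, ⋂ j, {p | ¬ G.RigidPair i j → G.α i j ≤ p.1 i + p.2 j}) ∩
       (⋂ i, ⋂ j, {p | G.RigidPair i j → G.β i j ≤ p.1 i ∨ G.γ i j ≤ p.2 j})) := by
    ext p
    simp only [Set.mem_inter_iff, Set.mem_iInter, Set.mem_setOf_eq]
    constructor
    · intro h
      exact ⟨h.matching, ⟨⟨⟨⟨⟨⟨⟨⟨h.u_nonneg, h.v_nonneg⟩, h.u_unm⟩, h.v_unm⟩,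
        fun i j => h.pair_sum i j⟩, fun i j => h.pair_rp i j⟩,
        fun i j => h.pair_rq i j⟩, fun i j => h.nb_flex i j⟩, fun i j => h.nb_rig i j⟩⟩
    · rintro ⟨h0, ⟨⟨⟨⟨⟨⟨⟨⟨h1, h2⟩, h3⟩, h4⟩, h5⟩, h6⟩, h7⟩, h8⟩, h9⟩⟩
      exact ⟨h0, h1, h2, h3, h4, h5, h6, h7, h8, h9⟩
  rw [heq]
  refine IsClosed.inter ?_ ?_
  · by_cases hM : Matching μ <;> simp [hM]
  refine (((((((((isClosed_iInter fun i => isClosed_le continuous_const (cu i)).inter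
    (isClosed_iInter fun j => isClosed_le continuous_const (cv j))).inter
    (isClosed_iInter fun i => isClosed_imp _ (isClosed_eq (cu i) continuous_const))).inter
    (isClosed_iInter fun j => isClosed_imp _ (isClosed_eq (cv j) continuous_const))).inter
    (isClosed_iInter fun i => isClosed_iInter fun j =>
      isClosed_imp _ (isClosed_eq ((cu i).add (cv j)) continuous_const))).inter
    (isClosed_iInter fun i => isClosed_iInter fun j =>
      isClosed_imp _ (isClosed_imp _ (isClosed_eq (cu i) continuous_const)))).inter
    (isClosed_iInter fun i => isClosed_iInter fun j =>
      isClosed_imp _ (isClosed_imp _ (isClosed_eq (cv j) continuous_const)))).inter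
    (isClosed_iInter fun i => isClosed_iInter fun j =>
      isClosed_imp _ (isClosed_le continuous_const ((cu i).add (cv j))))).inter
    (isClosed_iInter fun i => isClosed_iInter fun j => isClosed_imp _
      ((isClosed_le continuous_const (cu i)).union (isClosed_le continuous_const (cv j)))))

/-- Part 1 of the theorem: the set of stable payoffs is compact. -/
theorem stablePayoffs_compact (G : RiFle n) :
    IsCompact {p : (Fin n → ℝ) × (Fin n → ℝ) |
      ∃ μ : Fin n → Option (Fin n), G.Stable μ p.1 p.2} := by
  have heq : {p : (Fin n → ℝ) × (Fin n → ℝ) | ∃ μ, G.Stable μ p.1 p.2} =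
      ⋃ μ : Fin n → Option (Fin n), {p | G.IsPW μ p.1 p.2} := by
    ext p
    simp only [Set.mem_setOf_eq, Set.mem_iUnion]
    exact ⟨fun ⟨μ, h⟩ => ⟨μ, h.isPW⟩, fun ⟨μ, h⟩ => ⟨μ, h.stable⟩⟩
  rw [heq]
  refine IsCompact.of_isClosed_subset (isCompact_Icc (a := ((fun _ => 0, fun _ => 0) :
      (Fin n → ℝ) × (Fin n → ℝ))) (b := (fun _ => G.bnd, fun _ => G.bnd)))
    (isClosed_iUnion_of_finite fun μ => G.isClosed_PW μ) ?_
  rintro p hp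
  simp only [Set.mem_iUnion] at hp
  obtain ⟨μ, h⟩ := hp
  constructor
  · exact ⟨fun i => h.u_nonneg i, fun j => h.v_nonneg j⟩
  · exact ⟨fun i => h.u_le_bnd i, fun j => h.v_le_bnd j⟩

end Closed

end RiFle

-- ===== module M4a =====

namespace RiFle

section Walks

variable {V : Type*} (s t : V → Option V)

/-- iterate a partial function. -/
def pIter : ℕ → V → Option V
  | 0, x => some x
  | (k+1), x => (pIter k x).bind s

@[simp] lemma pIter_zero (x : V) : pIter s 0 x = some x := rfl

lemma pIter_succ (k : ℕ) (x : V) : pIter s (k+1) x = (pIter s k x).bind s := rfl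

lemma pIter_succ_eq_some {k : ℕ} {x y : V} :
    pIter s (k+1) x = some y ↔ ∃ z, pIter s k x = some z ∧ s z = some y := by
  rw [pIter_succ, Option.bind_eq_some_iff]

lemma pIter_add (a b : ℕ) (x : V) :
    pIter s (a + b) x = (pIter s a x).bind (pIter s b) := by
  induction b with
  | zero => cases pIter s a x <;> rfl
  | succ b ih =>
      rw [show a + (b+1) = (a+b)+1 by omega, pIter_succ, ih]
      cases pIter s a x with
      | none => simp
      | some z => simp [pIter_succ]

lemma pIter_prefix {c : ℕ} {x y : V} (h : pIter s c x = some y) {a : ℕ} (hac : a ≤ c) :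
    ∃ z, pIter s a x = some z := by
  obtain ⟨b, rfl⟩ := Nat.exists_eq_add_of_le hac
  rw [pIter_add] at h
  cases hz : pIter s a x with
  | none => rw [hz] at h; simp at h
  | some z => exact ⟨z, rfl⟩

variable {s t}

/-- inversion hypothesis: `t` is the partial inverse of `s`. -/
def PInv (s t : V → Option V) : Prop := ∀ x y, s x = some y ↔ t y = some x

lemma PInv.symm (h : PInv s t) : PInv t s := fun a b => (h b a).symm

lemma PInv.pIter_inv (h : PInv s t) : ∀ (k : ℕ) (x y : V),
    pIter s k x = some y → pIter t k y = some x := by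
  intro k
  induction k with
  | zero => intro x y hxy; simp at hxy; simp [hxy]
  | succ k ih =>
      intro x y hxy
      rw [pIter_succ_eq_some] at hxy
      obtain ⟨z, hz, hsz⟩ := hxy
      have h1 : t y = some z := (h z y).1 hsz
      have h2 := ih x z hz
      have : pIter t (1 + k) y = some x := by
        rw [pIter_add]
        have h1' : pIter t 1 y = t y := by rw [pIter_succ]; simp
        rw [h1', h1]
        simpa using h2
      rwa [show 1 + k = k + 1 by omega] at this

lemma PInv.s_inj (h : PInv s t) {x y z : V} (h1 : s x = some z) (h2 : s y = some z) :
    x = y := by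
  have e1 := (h x z).1 h1
  have e2 := (h y z).1 h2
  rw [e1] at e2
  simpa using e2

/-- peel equal iterates down. -/
lemma PInv.pIter_cancel (h : PInv s t) {a c : ℕ} {x y : V}
    (ha : pIter s a x = some y) (hc : pIter s c x = some y) (hac : a ≤ c) :
    pIter s (c - a) x = some x := by
  induction a generalizing c y with
  | zero => simp at ha; subst ha; simpa using hc
  | succ a ih =>
      have hac' : a + 1 ≤ c := hac
      have hc'' : c - 1 + 1 = c := by omega
      rw [pIter_succ_eq_some] at ha
      obtain ⟨z, hz, hsz⟩ := ha
      rw [← hc'', pIter_succ_eq_some] at hc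
      obtain ⟨w, hw, hsw⟩ := hc
      have hzw : z = w := h.s_inj hsz hsw
      subst hzw
      have := ih hz (c := c - 1) hw (by omega)
      rwa [show c - 1 - a = c - (a+1) by omega] at this

/-- periodicity of iterates. -/
lemma pIter_period {p : ℕ} {r : V} (hp : pIter s p r = some r) (c : ℕ) :
    pIter s (c * p) r = some r := by
  induction c with
  | zero => simp
  | succ c ih =>
      rw [show (c+1) * p = c * p + p by ring, pIter_add, ih]
      simpa using hp

/-- reachability via two partial functions from a base set. -/
inductive PReach (s t : V → Option V) (base : V → Prop) : V → Prop
  | base {x : V} : base x → PReach s t base x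
  | stepS {x y : V} : PReach s t base x → s x = some y → PReach s t base y
  | stepT {x y : V} : PReach s t base x → t x = some y → PReach s t base y

/-- straightening: anything reachable lies on a one-directional walk from the base. -/
lemma PReach.straighten {base : V → Prop} (hinv : PInv s t) {x : V}
    (hx : PReach s t base x) :
    ∃ (r : V) (k : ℕ), base r ∧ (pIter s k r = some x ∨ pIter t k r = some x) := by
  induction hx with
  | base hb => exact ⟨_, 0, hb, Or.inl rfl⟩
  | @stepS x0 y hr hy ih =>
      obtain ⟨r, k, hb, hk | hk⟩ := ih
      · exact ⟨r, k+1, hb, Or.inl (by rw [pIter_succ, hk]; simpa using hy)⟩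
      · cases k with
        | zero =>
            simp at hk; subst hk
            exact ⟨r, 1, hb, Or.inl (by rw [pIter_succ]; simpa using hy)⟩
        | succ k =>
            rw [pIter_succ_eq_some] at hk
            obtain ⟨z, hz, htz⟩ := hk
            have hsx : s x0 = some z := (hinv x0 z).2 htz
            have hyz : y = z := by rw [hsx] at hy; simpa using hy.symm
            subst hyz
            exact ⟨r, k, hb, Or.inr hz⟩
  | @stepT x0 y hr hy ih =>
      obtain ⟨r, k, hb, hk | hk⟩ := ih
      · cases k with
        | zero =>
            simp at hk; subst hk
            exact ⟨r, 1, hb, Or.inr (by rw [pIter_succ]; simpa using hy)⟩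
        | succ k =>
            rw [pIter_succ_eq_some] at hk
            obtain ⟨z, hz, hsz⟩ := hk
            have htx : t x0 = some z := (hinv z x0).1 hsz
            have hyz : y = z := by rw [htx] at hy; simpa using hy.symm
            subst hyz
            exact ⟨r, k, hb, Or.inl hz⟩
      · exact ⟨r, k+1, hb, Or.inr (by rw [pIter_succ, hk]; simpa using hy)⟩

/-- on a cycle, backward reachability is forward reachability. -/
lemma cycle_pred (hinv : PInv s t) {p : ℕ} {r : V} (hp : pIter s p r = some r)
    (hp1 : 1 ≤ p) : ∀ (k : ℕ) (b : V), pIter t k r = some b →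
    ∃ m, pIter s m r = some b := by
  intro k
  induction k with
  | zero => intro b hb; simp at hb; exact ⟨0, by simp [hb]⟩
  | succ k ih =>
      intro b hb
      rw [pIter_succ_eq_some] at hb
      obtain ⟨z, hz, htz⟩ := hb
      obtain ⟨m, hm⟩ := ih z hz
      have hsb : s b = some z := (hinv b z).2 htz
      cases m with
      | zero =>
          simp at hm; subst hm
          -- b is the s-predecessor of r on the cycle
          obtain ⟨w, hw⟩ := pIter_prefix s hp (a := p - 1) (by omega)
          have hsw : s w = some r := by
            have := hp
            rw [show p = (p-1) + 1 by omega, pIter_succ_eq_some] at this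
            obtain ⟨w', hw', hsw'⟩ := this
            rw [hw] at hw'
            cases hw'
            exact hsw'
          exact ⟨p - 1, by rwa [hinv.s_inj hsb hsw]⟩
      | succ m =>
          rw [pIter_succ_eq_some] at hm
          obtain ⟨w, hw, hsw⟩ := hm
          exact ⟨m, by rwa [hinv.s_inj hsb hsw]⟩

end Walks

end RiFle

-- ===== module M4b =====

open Finset
namespace RiFle

variable {n : ℕ} {G : RiFle n} {μ μ' : Fin n → Option (Fin n)} {u v u' v' : Fin n → ℝ}

open Classical in
/-- the (unique) partner of a Q-agent. -/
noncomputable def pre (μ : Fin n → Option (Fin n)) (j : Fin n) : Option (Fin n) :=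
  if h : ∃ i, μ i = some j then some h.choose else none

lemma pre_eq_some (hμ : Matching μ) {i j : Fin n} :
    pre μ j = some i ↔ μ i = some j := by
  unfold pre
  by_cases h : ∃ i, μ i = some j
  · rw [dif_pos h]
    constructor
    · intro he
      have := h.choose_spec
      rwa [← Option.some_inj.1 he]
    · intro hi
      have := h.choose_spec
      rw [Option.some_inj]
      exact hμ _ _ _ this hi
  · rw [dif_neg h]
    simp only [false_iff, reduceCtorEq, false_iff]
    exact fun hc => h ⟨i, hc⟩

lemma pre_eq_none {j : Fin n} :
    pre μ j = none ↔ ∀ i, μ i ≠ some j := by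
  unfold pre
  by_cases h : ∃ i, μ i = some j
  · rw [dif_pos h]
    simp only [reduceCtorEq, false_iff, not_forall, not_not]
    exact h
  · rw [dif_neg h]
    push_neg at h
    simpa using h

/-- the rightward step function on `P ⊕ Q`. -/
noncomputable def stepS (μ μ' : Fin n → Option (Fin n)) :
    (Fin n ⊕ Fin n) → Option (Fin n ⊕ Fin n)
  | Sum.inl i => (μ' i).map Sum.inr
  | Sum.inr j => (pre μ j).map Sum.inl

lemma stepS_inl {i : Fin n} {y} :
    stepS μ μ' (Sum.inl i) = some y ↔ ∃ j, y = Sum.inr j ∧ μ' i = some j := by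
  simp only [stepS, Option.map_eq_some_iff]
  constructor
  · rintro ⟨j, hj, rfl⟩; exact ⟨j, rfl, hj⟩
  · rintro ⟨j, rfl, hj⟩; exact ⟨j, hj, rfl⟩

lemma stepS_inr (hμ : Matching μ) {j : Fin n} {y} :
    stepS μ μ' (Sum.inr j) = some y ↔ ∃ i, y = Sum.inl i ∧ μ i = some j := by
  simp only [stepS, Option.map_eq_some_iff]
  constructor
  · rintro ⟨i, hi, rfl⟩; exact ⟨i, rfl, (pre_eq_some hμ).1 hi⟩
  · rintro ⟨i, rfl, hi⟩; exact ⟨i, (pre_eq_some hμ).2 hi, rfl⟩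

lemma stepS_inv (hμ : Matching μ) (hμ' : Matching μ') :
    PInv (stepS μ μ') (stepS μ' μ) := by
  intro x y
  cases x with
  | inl i =>
      cases y with
      | inl i' =>
          simp [stepS, Option.map_eq_some_iff]
      | inr j =>
          rw [stepS_inl, stepS_inr hμ']
          constructor
          · rintro ⟨j', hj', hm⟩
            injection hj' with hjj
            subst hjj
            exact ⟨i, rfl, hm⟩
          · rintro ⟨i', hi', hm⟩
            injection hi' with hii
            subst hii
            exact ⟨j, rfl, hm⟩
  | inr j =>
      cases y with
      | inl i =>
          rw [stepS_inr hμ, stepS_inl]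
          constructor
          · rintro ⟨i', hi', hm⟩
            injection hi' with hii
            subst hii
            exact ⟨j, rfl, hm⟩
          · rintro ⟨j', hj', hm⟩
            injection hj' with hjj
            subst hjj
            exact ⟨i, rfl, hm⟩
      | inr j' =>
          simp [stepS, Option.map_eq_some_iff]

/-- strictly-red-preferring vertices. -/
def sR (u u' v v' : Fin n → ℝ) : (Fin n ⊕ Fin n) → Prop
  | Sum.inl i => u i < u' i
  | Sum.inr j => v' j < v j

/-- ties. -/
def tieV (u u' v v' : Fin n → ℝ) : (Fin n ⊕ Fin n) → Prop
  | Sum.inl i => u i = u' i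
  | Sum.inr j => v j = v' j

lemma sR_not_sR_swap {x} (hx : sR u u' v v' x) : ¬ sR u' u v' v x := by
  cases x <;> exact not_lt_of_gt hx

lemma sR_not_tie {x} (hx : sR u u' v v' x) : ¬ tieV u u' v v' x := by
  cases x with
  | inl i => exact fun he => absurd he (ne_of_lt hx)
  | inr j => exact fun he => absurd he.symm (ne_of_lt hx)

lemma tie_of_not_strict {x} (h1 : ¬ sR u u' v v' x) (h2 : ¬ sR u' u v' v x) :
    tieV u u' v v' x := by
  cases x with
  | inl i => exact le_antisymm (not_lt.1 h2) (not_lt.1 h1)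
  | inr j => exact le_antisymm (not_lt.1 h1) (not_lt.1 h2)

lemma tie_swap {x} (hx : tieV u u' v v' x) : tieV u' u v' v x := by
  cases x <;> exact hx.symm

/-- rigidity of an (undirected) edge of the union graph. -/
def eRig (G : RiFle n) (x y : Fin n ⊕ Fin n) : Prop :=
  ∀ i j, (x = Sum.inl i ∧ y = Sum.inr j) ∨ (x = Sum.inr j ∧ y = Sum.inl i) →
    G.RigidPair i j

lemma eRig_symm {x y} (h : eRig G x y) : eRig G y x := by
  intro i j hc
  rcases hc with ⟨h1, h2⟩ | ⟨h1, h2⟩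
  · exact h i j (Or.inr ⟨h2, h1⟩)
  · exact h i j (Or.inl ⟨h2, h1⟩)

lemma eRig_inl_inr {i j : Fin n} (h : G.RigidPair i j) : eRig G (Sum.inl i) (Sum.inr j) := by
  intro i' j' hc
  rcases hc with ⟨h1, h2⟩ | ⟨h1, h2⟩ <;> simp_all

lemma eRig_inr_inl {i j : Fin n} (h : G.RigidPair i j) : eRig G (Sum.inr j) (Sum.inl i) := by
  intro i' j' hc
  rcases hc with ⟨h1, h2⟩ | ⟨h1, h2⟩ <;> simp_all

section StepLemmas

variable (h : G.IsPW μ u v) (h' : G.IsPW μ' u' v')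

include h h' in
/-- a strict step never lands on the other strict side. -/
lemma stepS_strict {x y} (hxy : stepS μ μ' x = some y) (hx : sR u u' v v' x) :
    ¬ sR u' u v' v y := by
  cases x with
  | inl i =>
      obtain ⟨j, rfl, hm⟩ := stepS_inl.1 hxy
      -- red pair (i,j): u' i + v' j = α i j
      have hs := h'.pair_sum i j hm
      have hxR : u i < u' i := hx
      intro hyB
      have hyB' : v j < v' j := hyB
      by_cases hr : G.RigidPair i j
      · obtain ⟨hb, hg⟩ := h'.pair_exact hm hr
        rcases h.nb_rig i j hr with h1 | h1
        · rw [← hb] at h1; exact absurd hxR (not_lt.2 h1)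
        · rw [← hg] at h1; exact absurd hyB' (not_lt.2 h1)
      · have := h.nb_flex i j hr
        linarith
  | inr j =>
      obtain ⟨i, rfl, hm⟩ := (stepS_inr h.matching).1 hxy
      have hs := h.pair_sum i j hm
      have hxR : v' j < v j := hx
      intro hyB
      have hyB' : u' i < u i := hyB
      by_cases hr : G.RigidPair i j
      · obtain ⟨hb, hg⟩ := h.pair_exact hm hr
        rcases h'.nb_rig i j hr with h1 | h1
        · rw [← hb] at h1; exact absurd hyB' (not_lt.2 h1)
        · rw [← hg] at h1; exact absurd hxR (not_lt.2 h1)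
      · have := h'.nb_flex i j hr
        linarith

include h h' in
/-- a strict step across a flexible edge stays strict. -/
lemma stepS_flex_R {x y} (hxy : stepS μ μ' x = some y) (hflex : ¬ eRig G x y)
    (hx : sR u u' v v' x) : sR u u' v v' y := by
  cases x with
  | inl i =>
      obtain ⟨j, rfl, hm⟩ := stepS_inl.1 hxy
      have hr : ¬ G.RigidPair i j := fun hc => hflex (eRig_inl_inr hc)
      have hs := h'.pair_sum i j hm
      have := h.nb_flex i j hr
      have hxR : u i < u' i := hx
      show v' j < v j
      linarith
  | inr j =>
      obtain ⟨i, rfl, hm⟩ := (stepS_inr h.matching).1 hxy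
      have hr : ¬ G.RigidPair i j := fun hc => hflex (eRig_inr_inl hc)
      have hs := h.pair_sum i j hm
      have := h'.nb_flex i j hr
      have hxR : v' j < v j := hx
      show u i < u' i
      linarith

include h h' in
/-- a tie step across a flexible edge avoids the other strict side. -/
lemma stepS_flex_T {x y} (hxy : stepS μ μ' x = some y) (hflex : ¬ eRig G x y)
    (hx : tieV u u' v v' x) : ¬ sR u' u v' v y := by
  cases x with
  | inl i =>
      obtain ⟨j, rfl, hm⟩ := stepS_inl.1 hxy
      have hr : ¬ G.RigidPair i j := fun hc => hflex (eRig_inl_inr hc)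
      have hs := h'.pair_sum i j hm
      have := h.nb_flex i j hr
      have hxT : u i = u' i := hx
      intro hyB
      have : v j < v' j := hyB
      linarith
  | inr j =>
      obtain ⟨i, rfl, hm⟩ := (stepS_inr h.matching).1 hxy
      have hr : ¬ G.RigidPair i j := fun hc => hflex (eRig_inr_inl hc)
      have hs := h.pair_sum i j hm
      have := h'.nb_flex i j hr
      have hxT : v j = v' j := hx
      intro hyB
      have : u' i < u i := hyB
      linarith

include h h' in
/-- walk ends are not strict. -/
lemma stepS_none {x} (hx : stepS μ μ' x = none) : ¬ sR u u' v v' x := by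
  cases x with
  | inl i =>
      have hm : μ' i = none := by
        by_contra hc
        cases hμ' : μ' i with
        | none => exact hc hμ'
        | some j => rw [stepS, hμ'] at hx; simp at hx
      have := h'.u_unm i hm
      have := h.u_nonneg i
      intro hc
      have : u i < u' i := hc
      linarith
  | inr j =>
      have hm : pre μ j = none := by
        by_contra hc
        cases hμ : pre μ j with
        | none => exact hc hμ
        | some i => rw [stepS, hμ] at hx; simp at hx
      have := h.v_unm j (pre_eq_none.1 hm)
      have := h'.v_nonneg j
      intro hc
      have : v' j < v j := hc
      linarith

end StepLemmas

end RiFle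

-- ===== module M4c =====

open Finset
namespace RiFle

variable {n : ℕ} {G : RiFle n} {μ μ' : Fin n → Option (Fin n)} {u v u' v' : Fin n → ℝ}

lemma tieV_inl {i : Fin n} : tieV u u' v v' (Sum.inl i) ↔ u i = u' i := Iff.rfl
lemma tieV_inr {j : Fin n} : tieV u u' v v' (Sum.inr j) ↔ v j = v' j := Iff.rfl

lemma stepS_inl_none {i : Fin n} : stepS μ μ' (Sum.inl i) = none ↔ μ' i = none := by
  simp [stepS, Option.map_eq_none_iff]

lemma stepS_inr_none {j : Fin n} :
    stepS μ μ' (Sum.inr j) = none ↔ ∀ i, μ i ≠ some j := by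
  simp only [stepS, Option.map_eq_none_iff]
  exact pre_eq_none

open Classical in
/-- The core contradiction: an all-tie arc with rigid (or absent) boundaries
contradicts non-degeneracy. -/
lemma arc_false (hnd : G.NonDegenerate) (h : G.IsPW μ u v) (h' : G.IsPW μ' u' v')
    (w : ℕ → Fin n ⊕ Fin n) (a c : ℕ) (hac : a ≤ c)
    (hstep : ∀ q, a ≤ q → q < c → stepS μ μ' (w q) = some (w (q+1)))
    (hdist : ∀ q q', a ≤ q → q < q' → q' ≤ c → w q ≠ w q')
    (htie : ∀ q, a ≤ q → q ≤ c → tieV u u' v v' (w q))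
    (hleft : stepS μ' μ (w a) = none ∨
      ∃ z, stepS μ' μ (w a) = some z ∧ (∀ q, a ≤ q → q ≤ c → w q ≠ z) ∧ eRig G (w a) z)
    (hright : stepS μ μ' (w c) = none ∨
      ∃ z, stepS μ μ' (w c) = some z ∧ (∀ q, a ≤ q → q ≤ c → w q ≠ z) ∧ eRig G (w c) z)
    (hdiff : a < c ∨ stepS μ' μ (w a) = none ∨ stepS μ μ' (w c) = none ∨
      stepS μ' μ (w a) ≠ stepS μ μ' (w c))
    (hsome : ¬ (stepS μ' μ (w a) = none ∧ stepS μ μ' (w c) = none)) : False := by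
  have hinv : PInv (stepS μ μ') (stepS μ' μ) := stepS_inv h.matching h'.matching
  set CP : Finset (Fin n) :=
    univ.filter (fun i => ∃ q, a ≤ q ∧ q ≤ c ∧ w q = Sum.inl i) with hCP
  set CQ : Finset (Fin n) :=
    univ.filter (fun j => ∃ q, a ≤ q ∧ q ≤ c ∧ w q = Sum.inr j) with hCQ
  have memCP : ∀ i : Fin n, i ∈ CP ↔ ∃ q, a ≤ q ∧ q ≤ c ∧ w q = Sum.inl i := by
    intro i; simp [hCP]
  have memCQ : ∀ j : Fin n, j ∈ CQ ↔ ∃ q, a ≤ q ∧ q ≤ c ∧ w q = Sum.inr j := by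
    intro j; simp [hCQ]
  -- edge-to-step translations
  have tA : ∀ i j : Fin n, μ i = some j → stepS μ' μ (Sum.inl i) = some (Sum.inr j) := by
    intro i j hm; simp [stepS, hm]
  have sA : ∀ i j : Fin n, μ i = some j → stepS μ μ' (Sum.inr j) = some (Sum.inl i) := by
    intro i j hm
    simp only [stepS, Option.map_eq_some_iff]
    exact ⟨i, (pre_eq_some h.matching).2 hm, rfl⟩
  have sA' : ∀ i j : Fin n, μ' i = some j → stepS μ μ' (Sum.inl i) = some (Sum.inr j) := by
    intro i j hm; simp [stepS, hm]
  have tA' : ∀ i j : Fin n, μ' i = some j → stepS μ' μ (Sum.inr j) = some (Sum.inl i) := by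
    intro i j hm
    simp only [stepS, Option.map_eq_some_iff]
    exact ⟨i, (pre_eq_some h'.matching).2 hm, rfl⟩
  -- Forcedness for μ
  have hf : G.Forced μ CP CQ := by
    intro i j hm hcross
    rcases hcross with ⟨hi, hj⟩ | ⟨hi, hj⟩
    · obtain ⟨q, haq, hqc, hwq⟩ := (memCP i).1 hi
      rcases Nat.lt_or_ge a q with haq' | haq'
      · exfalso
        have hs := hstep (q-1) (by omega) (by omega)
        rw [show q - 1 + 1 = q by omega] at hs
        have ht : stepS μ' μ (w q) = some (w (q-1)) := (hinv _ _).1 hs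
        rw [hwq, tA i j hm] at ht
        exact hj ((memCQ j).2 ⟨q-1, by omega, by omega, by
          rw [← Option.some_inj.1 ht]⟩)
      · have hqa : q = a := by omega
        subst hqa
        rcases hleft with hnone | ⟨z, hz, _, hrig⟩
        · rw [hwq, tA i j hm] at hnone; simp at hnone
        · rw [hwq] at hz hrig
          rw [tA i j hm] at hz
          have hzz : z = Sum.inr j := (Option.some_inj.1 hz).symm
          subst hzz
          exact hrig i j (Or.inl ⟨rfl, rfl⟩)
    · obtain ⟨q, haq, hqc, hwq⟩ := (memCQ j).1 hj
      rcases Nat.lt_or_ge q c with hqc' | hqc'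
      · exfalso
        have hs := hstep q haq hqc'
        rw [hwq, sA i j hm] at hs
        exact hi ((memCP i).2 ⟨q+1, by omega, by omega, by
          rw [← Option.some_inj.1 hs]⟩)
      · have hqa : q = c := by omega
        subst hqa
        rcases hright with hnone | ⟨z, hz, _, hrig⟩
        · rw [hwq, sA i j hm] at hnone; simp at hnone
        · rw [hwq] at hz hrig
          rw [sA i j hm] at hz
          have hzz : z = Sum.inl i := (Option.some_inj.1 hz).symm
          subst hzz
          exact hrig i j (Or.inr ⟨rfl, rfl⟩)
  -- Forcedness for μ'
  have hf' : G.Forced μ' CP CQ := by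
    intro i j hm hcross
    rcases hcross with ⟨hi, hj⟩ | ⟨hi, hj⟩
    · obtain ⟨q, haq, hqc, hwq⟩ := (memCP i).1 hi
      rcases Nat.lt_or_ge q c with hqc' | hqc'
      · exfalso
        have hs := hstep q haq hqc'
        rw [hwq, sA' i j hm] at hs
        exact hj ((memCQ j).2 ⟨q+1, by omega, by omega, by
          rw [← Option.some_inj.1 hs]⟩)
      · have hqa : q = c := by omega
        subst hqa
        rcases hright with hnone | ⟨z, hz, _, hrig⟩
        · rw [hwq, sA' i j hm] at hnone; simp at hnone
        · rw [hwq] at hz hrig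
          rw [sA' i j hm] at hz
          have hzz : z = Sum.inr j := (Option.some_inj.1 hz).symm
          subst hzz
          exact hrig i j (Or.inl ⟨rfl, rfl⟩)
    · obtain ⟨q, haq, hqc, hwq⟩ := (memCQ j).1 hj
      rcases Nat.lt_or_ge a q with haq' | haq'
      · exfalso
        have hs := hstep (q-1) (by omega) (by omega)
        rw [show q - 1 + 1 = q by omega] at hs
        have ht : stepS μ' μ (w q) = some (w (q-1)) := (hinv _ _).1 hs
        rw [hwq, tA' i j hm] at ht
        exact hi ((memCP i).2 ⟨q-1, by omega, by omega, by
          rw [← Option.some_inj.1 ht]⟩)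
      · have hqa : q = a := by omega
        subst hqa
        rcases hleft with hnone | ⟨z, hz, _, hrig⟩
        · rw [hwq, tA' i j hm] at hnone; simp at hnone
        · rw [hwq] at hz hrig
          rw [tA' i j hm] at hz
          have hzz : z = Sum.inl i := (Option.some_inj.1 hz).symm
          subst hzz
          exact hrig i j (Or.inr ⟨rfl, rfl⟩)
  -- apply non-degeneracy (via key_agree)
  obtain ⟨agreeP, agreeQ⟩ := key_agree hnd h h' CP CQ hf hf'
    (fun i hi => by
      obtain ⟨q, haq, hqc, hwq⟩ := (memCP i).1 hi
      have := htie q haq hqc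
      rwa [hwq, tieV_inl] at this)
    (fun j hj => by
      obtain ⟨q, haq, hqc, hwq⟩ := (memCQ j).1 hj
      have := htie q haq hqc
      rwa [hwq, tieV_inr] at this)
  -- final contradiction at the left end of the arc
  cases hwa : w a with
  | inl i =>
      have hiCP : i ∈ CP := (memCP i).2 ⟨a, le_refl a, hac, hwa⟩
      have hE : μ i = μ' i := agreeP i hiCP
      rcases Nat.lt_or_ge a c with hlt | hge
      · -- a < c : μ' i = some (w (a+1))
        have hs := hstep a (le_refl a) hlt
        rw [hwa] at hs
        obtain ⟨j1, hj1, hm1⟩ := stepS_inl.1 hs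
        rcases hleft with hnone | ⟨z, hz, hznot, _⟩
        · rw [hwa, stepS_inl_none (μ := μ') (μ' := μ)] at hnone
          rw [hnone, hm1] at hE
          simp at hE
        · rw [hwa] at hz
          obtain ⟨j0, hj0, hm0⟩ := stepS_inl (μ := μ') (μ' := μ) |>.1 hz
          rw [hm0, hm1] at hE
          have : z = w (a+1) := by
            rw [hj0, hj1, Option.some_inj.1 hE]
          exact hznot (a+1) (by omega) (by omega) this.symm
      · have hca : a = c := le_antisymm hac hge
        subst hca
        rcases hleft with hlnone | ⟨z, hz, hznot, _⟩
        · rcases hright with hrnone | ⟨z', hz', hznot', _⟩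
          · exact hsome ⟨hlnone, hrnone⟩
          · rw [hwa] at hlnone hz'
            obtain ⟨j1, hj1, hm1⟩ := stepS_inl.1 hz'
            rw [stepS_inl_none (μ := μ') (μ' := μ)] at hlnone
            rw [hlnone, hm1] at hE
            simp at hE
        · rcases hright with hrnone | ⟨z', hz', hznot', _⟩
          · rw [hwa] at hz hrnone
            obtain ⟨j0, hj0, hm0⟩ := stepS_inl (μ := μ') (μ' := μ) |>.1 hz
            rw [stepS_inl_none] at hrnone
            rw [hm0, hrnone] at hE
            simp at hE
          · rw [hwa] at hz hz'
            obtain ⟨j0, hj0, hm0⟩ := stepS_inl (μ := μ') (μ' := μ) |>.1 hz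
            obtain ⟨j1, hj1, hm1⟩ := stepS_inl.1 hz'
            rw [hm0, hm1] at hE
            have hzz : z = z' := by rw [hj0, hj1, Option.some_inj.1 hE]
            rcases hdiff with h1 | h1 | h1 | h1
            · omega
            · rw [hwa] at h1; rw [h1] at hz; cases hz
            · rw [hwa] at h1; rw [h1] at hz'; cases hz'
            · rw [hwa] at h1; rw [hz, hz'] at h1
              exact h1 (by rw [hzz])
  | inr j =>
      have hjCQ : j ∈ CQ := (memCQ j).2 ⟨a, le_refl a, hac, hwa⟩
      have hE := agreeQ
      rcases Nat.lt_or_ge a c with hlt | hge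
      · -- a < c : blue partner of j is w (a+1)
        have hs := hstep a (le_refl a) hlt
        rw [hwa] at hs
        obtain ⟨i1, hi1, hm1⟩ := (stepS_inr h.matching).1 hs
        have hm1' : μ' i1 = some j := (hE i1 j hjCQ).1 hm1
        have ht : stepS μ' μ (w a) = some (Sum.inl i1) := by
          rw [hwa]; exact tA' i1 j hm1'
        rcases hleft with hnone | ⟨z, hz, hznot, _⟩
        · rw [ht] at hnone; cases hnone
        · rw [ht] at hz
          have : z = Sum.inl i1 := (Option.some_inj.1 hz).symm
          subst this
          exact hznot (a+1) (by omega) (by omega) (by rw [hi1])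
      · have hca : a = c := le_antisymm hac hge
        subst hca
        rcases hright with hrnone | ⟨z', hz', hznot', _⟩
        · have hnb : ∀ i, μ i ≠ some j := by
            rw [hwa] at hrnone
            exact stepS_inr_none.1 hrnone
          rcases hleft with hlnone | ⟨z, hz, hznot, _⟩
          · exact hsome ⟨hlnone, hrnone⟩
          · rw [hwa] at hz
            obtain ⟨i0, hi0, hm0⟩ := (stepS_inr (μ := μ') (μ' := μ) h'.matching).1 hz
            exact hnb i0 ((hE i0 j hjCQ).2 hm0)
        · rw [hwa] at hz'
          obtain ⟨i1, hi1, hm1⟩ := (stepS_inr h.matching).1 hz'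
          have hm1' : μ' i1 = some j := (hE i1 j hjCQ).1 hm1
          have ht : stepS μ' μ (Sum.inr j) = some (Sum.inl i1) := tA' i1 j hm1'
          rcases hleft with hlnone | ⟨z, hz, hznot, _⟩
          · rw [hwa] at hlnone; rw [hlnone] at ht; cases ht
          · rw [hwa] at hz
            rw [ht] at hz
            have hzi : z = Sum.inl i1 := (Option.some_inj.1 hz).symm
            rcases hdiff with h1 | h1 | h1 | h1
            · omega
            · rw [hwa] at h1; rw [h1] at ht; cases ht
            · rw [hwa] at h1; rw [h1] at hz'; cases hz'
            · rw [hwa] at h1; rw [ht, hz'] at h1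
              exact h1 (by rw [hi1])

end RiFle

-- ===== module M4d =====

open Finset
namespace RiFle

variable {n : ℕ} {G : RiFle n} {μ μ' : Fin n → Option (Fin n)} {u v u' v' : Fin n → ℝ}

open Classical

lemma not_sR_sB {x : Fin n ⊕ Fin n} (h1 : sR u u' v v' x) (h2 : sR u' u v' v x) : False :=
  sR_not_sR_swap h1 h2

/-- MAIN 1: the rightward walk from a strictly-red vertex avoids strictly-blue ones. -/
lemma main1 (hnd : G.NonDegenerate) (h : G.IsPW μ u v) (h' : G.IsPW μ' u' v') :
    ∀ (k : ℕ) (r x : Fin n ⊕ Fin n), pIter (stepS μ μ') k r = some x →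
      sR u u' v v' r → ¬ sR u' u v' v x := by
  have hinv : PInv (stepS μ μ') (stepS μ' μ) := stepS_inv h.matching h'.matching
  intro k
  induction k using Nat.strong_induction_on with
  | _ k IH =>
    intro r x hwalk hr hx
    rcases Nat.eq_zero_or_pos k with hk0 | hkpos
    · subst hk0
      simp at hwalk
      subst hwalk
      exact not_sR_sB hr hx
    -- the walk vertices
    set w : ℕ → Fin n ⊕ Fin n := fun q => (pIter (stepS μ μ') q r).getD r with hwdef
    have hw : ∀ q, q ≤ k → pIter (stepS μ μ') q r = some (w q) := by
      intro q hq
      obtain ⟨z, hz⟩ := pIter_prefix _ hwalk hq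
      rw [hz]; simp [hwdef, hz]
    have hwk : w k = x := by
      have := hw k (le_refl k)
      rw [hwalk] at this
      simpa using this.symm
    have hw0 : w 0 = r := by
      have := hw 0 (Nat.zero_le k)
      simpa using this.symm
    have hnB : ∀ q, q < k → ¬ sR u' u v' v (w q) := by
      intro q hq
      exact IH q hq r (w q) (hw q (le_of_lt hq)) hr
    have hstep : ∀ q, q < k → stepS μ μ' (w q) = some (w (q+1)) := by
      intro q hq
      have h1 := hw q (le_of_lt hq)
      have h2 := hw (q+1) hq
      rw [pIter_succ, h1] at h2
      simpa using h2
    have hdist : ∀ q q', q < q' → q' ≤ k → w q ≠ w q' := by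
      intro q q' hlt hle he
      have hp : pIter (stepS μ μ') (q' - q) r = some r :=
        hinv.pIter_cancel (he ▸ hw q (le_trans (le_of_lt hlt) hle)) (hw q' hle)
          (le_of_lt hlt)
      have hk2 : pIter (stepS μ μ') (k - (q' - q)) r = some x := by
        have : pIter (stepS μ μ') ((q' - q) + (k - (q' - q))) r = some x := by
          rw [show (q' - q) + (k - (q' - q)) = k by omega]
          exact hwalk
        rw [pIter_add, hp] at this
        simpa using this
      exact IH (k - (q' - q)) (by omega) r x hk2 hr hx
    -- the last non-tie index before k
    set l : ℕ := Nat.findGreatest (fun q => ¬ tieV u u' v v' (w q)) (k-1) with hldef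
    have hl0 : ¬ tieV u u' v v' (w 0) := by
      rw [hw0]; exact sR_not_tie hr
    have hlP : ¬ tieV u u' v v' (w l) := by
      have := Nat.findGreatest_spec (P := fun q => ¬ tieV u u' v v' (w q))
        (Nat.zero_le (k-1)) hl0
      rwa [← hldef] at this
    have hlle : l ≤ k - 1 := Nat.findGreatest_le (k-1)
    have hties : ∀ q, l < q → q ≤ k - 1 → tieV u u' v v' (w q) := by
      intro q h1 h2
      by_contra hc
      exact absurd hc (not_not.2 (by
        by_contra hc2
        exact absurd (Nat.findGreatest_is_greatest (hldef ▸ h1) h2) (fun hg => hg hc2)))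
    have hRl : sR u u' v v' (w l) := by
      by_contra hc
      exact hlP (tie_of_not_strict hc (hnB l (by omega)))
    rcases Nat.lt_or_ge (l+1) k with hlk | hlk
    · -- a genuine arc [l+1, k-1]
      have hsl : stepS μ μ' (w l) = some (w (l+1)) := hstep l (by omega)
      have hrigl : eRig G (w l) (w (l+1)) := by
        by_contra hflex
        have := stepS_flex_R h h' hsl hflex hRl
        exact sR_not_tie this (hties (l+1) (by omega) (by omega))
      have hsk : stepS μ μ' (w (k-1)) = some x := by
        have := hstep (k-1) (by omega)
        rwa [show k - 1 + 1 = k by omega, hwk] at this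
      have hrigk : eRig G (w (k-1)) x := by
        by_contra hflex
        exact stepS_flex_T h h' hsk hflex (hties (k-1) (by omega) (le_refl _)) hx
      refine arc_false hnd h h' w (l+1) (k-1) (by omega)
        (fun q h1 h2 => hstep q (by omega))
        (fun q q' h1 h2 h3 => hdist q q' h2 (by omega))
        (fun q h1 h2 => hties q (by omega) h2)
        (Or.inr ⟨w l, (hinv _ _).1 hsl, fun q h1 h2 hq => hdist l q (by omega) (by omega) hq.symm, eRig_symm hrigl⟩)
        (Or.inr ⟨x, hsk, fun q h1 h2 hq => hdist q k (by omega) (le_refl k) (by rw [hq, hwk]), hrigk⟩)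
        ?_ ?_
      · rcases Nat.lt_or_ge (l+1) (k-1) with hc | hc
        · exact Or.inl hc
        · refine Or.inr (Or.inr (Or.inr ?_))
          have e1 : stepS μ' μ (w (l+1)) = some (w l) := (hinv _ _).1 hsl
          have e2 : w (l+1) = w (k-1) := by rw [show l + 1 = k - 1 by omega]
          rw [e1, hsk]
          intro hc2
          have hwlx : w l = x := by simpa using hc2
          exact not_sR_sB hRl (by rw [hwlx]; exact hx)
      · rintro ⟨h1, -⟩
        rw [(hinv _ _).1 hsl] at h1
        cases h1
    · -- l + 1 = k : single strict step
      have hlk' : l + 1 = k := by omega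
      have hsl : stepS μ μ' (w l) = some x := by
        have := hstep l (by omega)
        rwa [hlk', hwk] at this
      exact stepS_strict h h' hsl hRl hx

/-- TERM: the rightward walk from a strictly-red vertex never terminates. -/
lemma term_false (hnd : G.NonDegenerate) (h : G.IsPW μ u v) (h' : G.IsPW μ' u' v')
    {r : Fin n ⊕ Fin n} (hr : sR u u' v v' r) {m0 : ℕ}
    (hnone : pIter (stepS μ μ') m0 r = none) : False := by
  have hinv : PInv (stepS μ μ') (stepS μ' μ) := stepS_inv h.matching h'.matching
  have hex : ∃ m, pIter (stepS μ μ') m r = none := ⟨m0, hnone⟩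
  set m1 := Nat.find hex with hm1def
  have hm1 : pIter (stepS μ μ') m1 r = none := Nat.find_spec hex
  have hm1min : ∀ q, q < m1 → pIter (stepS μ μ') q r ≠ none := fun q hq => Nat.find_min hex hq
  have hm1pos : 1 ≤ m1 := by
    rcases Nat.eq_zero_or_pos m1 with h0 | h0
    · rw [h0] at hm1; simp at hm1
    · exact h0
  set w : ℕ → Fin n ⊕ Fin n := fun q => (pIter (stepS μ μ') q r).getD r with hwdef
  have hw : ∀ q, q < m1 → pIter (stepS μ μ') q r = some (w q) := by
    intro q hq
    cases hz : pIter (stepS μ μ') q r with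
    | none => exact absurd hz (hm1min q hq)
    | some z => simp [hwdef, hz]
  have hw0 : w 0 = r := by
    have := hw 0 (by omega)
    simpa using this.symm
  have hnB : ∀ q, q < m1 → ¬ sR u' u v' v (w q) :=
    fun q hq => main1 hnd h h' q r (w q) (hw q hq) hr
  have hstep : ∀ q, q + 1 < m1 → stepS μ μ' (w q) = some (w (q+1)) := by
    intro q hq
    have h1 := hw q (by omega)
    have h2 := hw (q+1) hq
    rw [pIter_succ, h1] at h2
    simpa using h2
  have hdist : ∀ q q', q < q' → q' < m1 → w q ≠ w q' := by
    intro q q' hlt hle he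
    have hp : pIter (stepS μ μ') (q' - q) r = some r :=
      hinv.pIter_cancel (he ▸ hw q (by omega)) (hw q' hle) (le_of_lt hlt)
    have hall : ∀ m, pIter (stepS μ μ') m r ≠ none := by
      intro m
      induction m using Nat.strong_induction_on with
      | _ m IHm =>
        rcases Nat.lt_or_ge m (q' - q) with hc | hc
        · intro hcon
          exact hm1min m (by omega) hcon
        · rw [show m = (q' - q) + (m - (q' - q)) by omega, pIter_add, hp]
          simp only [Option.bind_some]
          exact IHm (m - (q' - q)) (by omega)
    exact hall m1 hm1
  -- the terminal vertex is an anchored tie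
  have hterm : stepS μ μ' (w (m1 - 1)) = none := by
    have h1 := hw (m1 - 1) (by omega)
    have := hm1
    rw [show m1 = (m1 - 1) + 1 by omega, pIter_succ, h1] at this
    simpa using this
  have hnR : ¬ sR u u' v v' (w (m1-1)) := stepS_none h h' hterm
  have htiet : tieV u u' v v' (w (m1-1)) :=
    tie_of_not_strict hnR (hnB (m1-1) (by omega))
  rcases Nat.eq_zero_or_pos (m1 - 1) with h0 | h0
  · rw [h0, hw0] at htiet
    exact sR_not_tie hr htiet
  -- the backward tie-propagation start
  have hexa : ∃ a, (∀ q, a ≤ q → q ≤ m1 - 1 → tieV u u' v v' (w q)) :=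
    ⟨m1 - 1, fun q h1 h2 => by rw [le_antisymm h2 h1]; exact htiet⟩
  set a0 := Nat.find hexa with ha0def
  have ha0 : ∀ q, a0 ≤ q → q ≤ m1 - 1 → tieV u u' v v' (w q) := Nat.find_spec hexa
  have ha0le : a0 ≤ m1 - 1 := Nat.find_le (by
    intro q h1 h2
    rw [le_antisymm h2 h1]; exact htiet)
  have ha0pos : 1 ≤ a0 := by
    rcases Nat.eq_zero_or_pos a0 with hc | hc
    · exfalso
      have := ha0 0 (by omega) (by omega)
      rw [hw0] at this
      exact sR_not_tie hr this
    · exact hc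
  have hprev : ¬ tieV u u' v v' (w (a0 - 1)) := by
    have hnot := Nat.find_min hexa (m := a0 - 1) (by omega)
    push_neg at hnot
    obtain ⟨q, h1, h2, h3⟩ := hnot
    rcases Nat.lt_or_ge q a0 with hc | hc
    · rwa [show q = a0 - 1 by omega] at h3
    · exact absurd (ha0 q hc h2) h3
  have hRprev : sR u u' v v' (w (a0 - 1)) := by
    by_contra hc
    exact hprev (tie_of_not_strict hc (hnB (a0-1) (by omega)))
  have hsprev : stepS μ μ' (w (a0 - 1)) = some (w a0) := by
    have := hstep (a0 - 1) (by omega)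
    rwa [show a0 - 1 + 1 = a0 by omega] at this
  have hrig : eRig G (w (a0 - 1)) (w a0) := by
    by_contra hflex
    have := stepS_flex_R h h' hsprev hflex hRprev
    exact sR_not_tie this (ha0 a0 (le_refl a0) (by omega))
  refine arc_false hnd h h' w a0 (m1 - 1) ha0le
    (fun q h1 h2 => hstep q (by omega))
    (fun q q' h1 h2 h3 => hdist q q' h2 (by omega))
    ha0
    (Or.inr ⟨w (a0 - 1), (hinv _ _).1 hsprev,
      fun q h1 h2 hq => hdist (a0 - 1) q (by omega) (by omega) hq.symm,
      eRig_symm hrig⟩)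
    (Or.inl hterm)
    (Or.inr (Or.inr (Or.inl hterm)))
    ?_
  rintro ⟨h1, -⟩
  rw [(hinv _ _).1 hsprev] at h1
  cases h1

/-- NOBAD: nothing reachable from the strictly-red region is strictly blue. -/
lemma nobad (hnd : G.NonDegenerate) (h : G.IsPW μ u v) (h' : G.IsPW μ' u' v')
    {x : Fin n ⊕ Fin n}
    (hx : PReach (stepS μ μ') (stepS μ' μ) (sR u u' v v') x) :
    ¬ sR u' u v' v x := by
  intro hB
  have hinv : PInv (stepS μ μ') (stepS μ' μ) := stepS_inv h.matching h'.matching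
  obtain ⟨r, k, hr, hk | hk⟩ := hx.straighten hinv
  · exact main1 hnd h h' k r x hk hr hB
  · -- the walk never dies, hence is cyclic
    have hall : ∀ m, pIter (stepS μ μ') m r ≠ none := by
      intro m hm
      exact term_false hnd h h' hr hm
    set N := Fintype.card (Fin n ⊕ Fin n) with hN
    have hcard : Fintype.card (Fin n ⊕ Fin n) < Fintype.card (Fin (N+1)) := by
      simp [hN]
    set f : Fin (N+1) → Fin n ⊕ Fin n :=
      fun m => (pIter (stepS μ μ') (m : ℕ) r).getD r with hfdef
    obtain ⟨m1, m2, hne, hfe⟩ := Fintype.exists_ne_map_eq_of_card_lt f hcard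
    have hsome : ∀ m : ℕ, pIter (stepS μ μ') m r = some (f ⟨m % (N+1), Nat.mod_lt _ (by omega)⟩) ∨ True := fun m => Or.inr trivial
    -- extract concrete somes
    have hg : ∀ m : Fin (N+1), pIter (stepS μ μ') (m : ℕ) r = some (f m) := by
      intro m
      cases hz : pIter (stepS μ μ') (m : ℕ) r with
      | none => exact absurd hz (hall _)
      | some z => simp [hfdef, hz]
    -- wlog m1 < m2
    rcases Nat.lt_or_ge (m1 : ℕ) (m2 : ℕ) with hlt | hge
    · have hp : pIter (stepS μ μ') ((m2 : ℕ) - (m1 : ℕ)) r = some r :=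
        hinv.pIter_cancel (hfe ▸ hg m1) (hg m2) (le_of_lt hlt)
      obtain ⟨m, hm⟩ := cycle_pred hinv hp (by omega) k x hk
      exact main1 hnd h h' m r x hm hr hB
    · have hlt2 : (m2 : ℕ) < (m1 : ℕ) := by
        rcases Nat.lt_or_ge (m2 : ℕ) (m1 : ℕ) with hc | hc
        · exact hc
        · exact absurd (Fin.ext (by omega)) hne
      have hp : pIter (stepS μ μ') ((m1 : ℕ) - (m2 : ℕ)) r = some r :=
        hinv.pIter_cancel (hfe ▸ hg m2) (hg m1) (le_of_lt hlt2)
      obtain ⟨m, hm⟩ := cycle_pred hinv hp (by omega) k x hk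
      exact main1 hnd h h' m r x hm hr hB

end RiFle

-- ===== module M4e =====

open Finset
namespace RiFle

variable {n : ℕ} {G : RiFle n} {μ μ' : Fin n → Option (Fin n)} {u v u' v' : Fin n → ℝ}

open Classical

section JoinMeet

variable (hnd : G.NonDegenerate) (h : G.IsPW μ u v) (h' : G.IsPW μ' u' v')

local notation "Rch" => PReach (stepS μ μ') (stepS μ' μ) (sR u u' v v')

include hnd h h'

section Aux

variable (hRch : ∀ x, Rch x → ¬ sR u' u v' v x)

omit hnd h h'
include hRch

omit hRch in
lemma c1 {i j} (hr : Rch (Sum.inl i)) (hm : μ' i = some j) : Rch (Sum.inr j) :=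
  hr.stepS (by simp [stepS, hm])

omit hRch hnd h' in
include h in
lemma c3 {i j} (hr : Rch (Sum.inr j)) (hm : μ i = some j) : Rch (Sum.inl i) :=
  hr.stepS (by
    simp only [stepS, Option.map_eq_some_iff]
    exact ⟨i, (pre_eq_some h.matching).2 hm, rfl⟩)

omit hRch in
lemma c2 {i j} (hr : Rch (Sum.inl i)) (hm : μ i = some j) : Rch (Sum.inr j) :=
  hr.stepT (by simp [stepS, hm])

omit hRch hnd h in
include h' in
lemma c4 {i j} (hr : Rch (Sum.inr j)) (hm : μ' i = some j) : Rch (Sum.inl i) :=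
  hr.stepT (by
    simp only [stepS, Option.map_eq_some_iff]
    exact ⟨i, (pre_eq_some h'.matching).2 hm, rfl⟩)

end Aux

/-- The join of two stable outcomes is stable. -/
theorem join_exists :
    ∃ μb, G.IsPW μb (fun i => max (u i) (u' i)) (fun j => min (v j) (v' j)) := by
  have hRch : ∀ x, Rch x → ¬ sR u' u v' v x := fun x hx => nobad hnd h h' hx
  have fR : ∀ i, Rch (Sum.inl i) → u i ≤ u' i := by
    intro i hr
    have := hRch _ hr
    exact not_lt.1 this
  have fNR : ∀ i, ¬ Rch (Sum.inl i) → u' i ≤ u i := by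
    intro i hr
    by_contra hc
    exact hr (PReach.base (by exact not_le.1 hc))
  have gR : ∀ j, Rch (Sum.inr j) → v' j ≤ v j := by
    intro j hr
    have := hRch _ hr
    exact not_lt.1 this
  have gNR : ∀ j, ¬ Rch (Sum.inr j) → v j ≤ v' j := by
    intro j hr
    by_contra hc
    exact hr (PReach.base (by exact not_le.1 hc))
  have hmaxR : ∀ i, Rch (Sum.inl i) → max (u i) (u' i) = u' i :=
    fun i hr => max_eq_right (fR i hr)
  have hmaxN : ∀ i, ¬ Rch (Sum.inl i) → max (u i) (u' i) = u i :=
    fun i hr => max_eq_left (fNR i hr)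
  have hminR : ∀ j, Rch (Sum.inr j) → min (v j) (v' j) = v' j :=
    fun j hr => min_eq_right (gR j hr)
  have hminN : ∀ j, ¬ Rch (Sum.inr j) → min (v j) (v' j) = v j :=
    fun j hr => min_eq_left (gNR j hr)
  refine ⟨fun i => if Rch (Sum.inl i) then μ' i else μ i, ?_, ?_, ?_, ?_, ?_, ?_, ?_, ?_, ?_, ?_⟩
  · -- matching
    intro i i' j hm hm'
    by_cases hri : Rch (Sum.inl i) <;> by_cases hri' : Rch (Sum.inl i')
    all_goals simp only [hri, hri', if_true, if_false] at hm hm'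
    · exact h'.matching i i' j hm hm'
    · exact absurd (c3 h (c1 hri hm) hm') hri'
    · exact absurd (c3 h (c1 hri' hm') hm) hri
    · exact h.matching i i' j hm hm'
  · intro i
    exact le_max_of_le_left (h.u_nonneg i)
  · intro j
    exact le_min (h.v_nonneg j) (h'.v_nonneg j)
  · intro i hm
    by_cases hri : Rch (Sum.inl i)
    · rw [if_pos hri] at hm
      rw [hmaxR i hri, h'.u_unm i hm]
    · rw [if_neg hri] at hm
      rw [hmaxN i hri, h.u_unm i hm]
  · intro j hj
    by_cases hrj : Rch (Sum.inr j)
    · have : ∀ i, μ' i ≠ some j := by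
        intro i hc
        have hri : Rch (Sum.inl i) := c4 h' hrj hc
        exact hj i (by rw [if_pos hri]; exact hc)
      rw [hminR j hrj, h'.v_unm j this]
    · have : ∀ i, μ i ≠ some j := by
        intro i hc
        by_cases hri : Rch (Sum.inl i)
        · exact hrj (c2 hri hc)
        · exact hj i (by rw [if_neg hri]; exact hc)
      rw [hminN j hrj, h.v_unm j this]
  · intro i j hm
    by_cases hri : Rch (Sum.inl i)
    · rw [if_pos hri] at hm
      rw [hmaxR i hri, hminR j (c1 hri hm)]
      exact h'.pair_sum i j hm
    · rw [if_neg hri] at hm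
      have hrj : ¬ Rch (Sum.inr j) := fun hc => hri (c3 h hc hm)
      rw [hmaxN i hri, hminN j hrj]
      exact h.pair_sum i j hm
  · intro i j hm hp
    by_cases hri : Rch (Sum.inl i)
    · rw [if_pos hri] at hm
      rw [hmaxR i hri]
      exact h'.pair_rp i j hm hp
    · rw [if_neg hri] at hm
      rw [hmaxN i hri]
      exact h.pair_rp i j hm hp
  · intro i j hm hq
    by_cases hri : Rch (Sum.inl i)
    · rw [if_pos hri] at hm
      rw [hminR j (c1 hri hm)]
      exact h'.pair_rq i j hm hq
    · rw [if_neg hri] at hm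
      have hrj : ¬ Rch (Sum.inr j) := fun hc => hri (c3 h hc hm)
      rw [hminN j hrj]
      exact h.pair_rq i j hm hq
  · intro i j hrig
    rcases min_cases (v j) (v' j) with ⟨he, _⟩ | ⟨he, _⟩
    · rw [he]
      have := h.nb_flex i j hrig
      have := le_max_left (u i) (u' i)
      linarith
    · rw [he]
      have := h'.nb_flex i j hrig
      have := le_max_right (u i) (u' i)
      linarith
  · intro i j hrig
    rcases min_cases (v j) (v' j) with ⟨he, _⟩ | ⟨he, _⟩
    · rcases h.nb_rig i j hrig with h1 | h1
      · exact Or.inl (le_trans h1 (le_max_left _ _))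
      · exact Or.inr (by rw [he]; exact h1)
    · rcases h'.nb_rig i j hrig with h1 | h1
      · exact Or.inl (le_trans h1 (le_max_right _ _))
      · exact Or.inr (by rw [he]; exact h1)

/-- The meet of two stable outcomes is stable. -/
theorem meet_exists :
    ∃ μt, G.IsPW μt (fun i => min (u i) (u' i)) (fun j => max (v j) (v' j)) := by
  have hRch : ∀ x, Rch x → ¬ sR u' u v' v x := fun x hx => nobad hnd h h' hx
  have fR : ∀ i, Rch (Sum.inl i) → u i ≤ u' i := by
    intro i hr
    exact not_lt.1 (hRch _ hr)
  have fNR : ∀ i, ¬ Rch (Sum.inl i) → u' i ≤ u i := by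
    intro i hr
    by_contra hc
    exact hr (PReach.base (by exact not_le.1 hc))
  have gR : ∀ j, Rch (Sum.inr j) → v' j ≤ v j := by
    intro j hr
    exact not_lt.1 (hRch _ hr)
  have gNR : ∀ j, ¬ Rch (Sum.inr j) → v j ≤ v' j := by
    intro j hr
    by_contra hc
    exact hr (PReach.base (by exact not_le.1 hc))
  have hminR : ∀ i, Rch (Sum.inl i) → min (u i) (u' i) = u i :=
    fun i hr => min_eq_left (fR i hr)
  have hminN : ∀ i, ¬ Rch (Sum.inl i) → min (u i) (u' i) = u' i :=
    fun i hr => min_eq_right (fNR i hr)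
  have hmaxR : ∀ j, Rch (Sum.inr j) → max (v j) (v' j) = v j :=
    fun j hr => max_eq_left (gR j hr)
  have hmaxN : ∀ j, ¬ Rch (Sum.inr j) → max (v j) (v' j) = v' j :=
    fun j hr => max_eq_right (gNR j hr)
  refine ⟨fun i => if Rch (Sum.inl i) then μ i else μ' i, ?_, ?_, ?_, ?_, ?_, ?_, ?_, ?_, ?_, ?_⟩
  · intro i i' j hm hm'
    by_cases hri : Rch (Sum.inl i) <;> by_cases hri' : Rch (Sum.inl i')
    all_goals simp only [hri, hri', if_true, if_false] at hm hm'
    · exact h.matching i i' j hm hm'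
    · exact absurd (c4 h' (c2 hri hm) hm') hri'
    · exact absurd (c4 h' (c2 hri' hm') hm) hri
    · exact h'.matching i i' j hm hm'
  · intro i
    exact le_min (h.u_nonneg i) (h'.u_nonneg i)
  · intro j
    exact le_max_of_le_left (h.v_nonneg j)
  · intro i hm
    by_cases hri : Rch (Sum.inl i)
    · rw [if_pos hri] at hm
      rw [hminR i hri, h.u_unm i hm]
    · rw [if_neg hri] at hm
      rw [hminN i hri, h'.u_unm i hm]
  · intro j hj
    by_cases hrj : Rch (Sum.inr j)
    · have : ∀ i, μ i ≠ some j := by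
        intro i hc
        have hri : Rch (Sum.inl i) := c3 h hrj hc
        exact hj i (by rw [if_pos hri]; exact hc)
      rw [hmaxR j hrj, h.v_unm j this]
    · have : ∀ i, μ' i ≠ some j := by
        intro i hc
        by_cases hri : Rch (Sum.inl i)
        · exact hrj (c1 hri hc)
        · exact hj i (by rw [if_neg hri]; exact hc)
      rw [hmaxN j hrj, h'.v_unm j this]
  · intro i j hm
    by_cases hri : Rch (Sum.inl i)
    · rw [if_pos hri] at hm
      rw [hminR i hri, hmaxR j (c2 hri hm)]
      exact h.pair_sum i j hm
    · rw [if_neg hri] at hm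
      have hrj : ¬ Rch (Sum.inr j) := fun hc => hri (c4 h' hc hm)
      rw [hminN i hri, hmaxN j hrj]
      exact h'.pair_sum i j hm
  · intro i j hm hp
    by_cases hri : Rch (Sum.inl i)
    · rw [if_pos hri] at hm
      rw [hminR i hri]
      exact h.pair_rp i j hm hp
    · rw [if_neg hri] at hm
      rw [hminN i hri]
      exact h'.pair_rp i j hm hp
  · intro i j hm hq
    by_cases hri : Rch (Sum.inl i)
    · rw [if_pos hri] at hm
      rw [hmaxR j (c2 hri hm)]
      exact h.pair_rq i j hm hq
    · rw [if_neg hri] at hm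
      have hrj : ¬ Rch (Sum.inr j) := fun hc => hri (c4 h' hc hm)
      rw [hmaxN j hrj]
      exact h'.pair_rq i j hm hq
  · intro i j hrig
    rcases min_cases (u i) (u' i) with ⟨he, _⟩ | ⟨he, _⟩
    · rw [he]
      have := h.nb_flex i j hrig
      have := le_max_left (v j) (v' j)
      linarith
    · rw [he]
      have := h'.nb_flex i j hrig
      have := le_max_right (v j) (v' j)
      linarith
  · intro i j hrig
    rcases min_cases (u i) (u' i) with ⟨he, _⟩ | ⟨he, _⟩
    · rcases h.nb_rig i j hrig with h1 | h1
      · exact Or.inl (by rw [he]; exact h1)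
      · exact Or.inr (le_trans h1 (le_max_left _ _))
    · rcases h'.nb_rig i j hrig with h1 | h1
      · exact Or.inl (by rw [he]; exact h1)
      · exact Or.inr (le_trans h1 (le_max_right _ _))

end JoinMeet

end RiFle

-- ===== module M5a =====

open Finset
namespace RiFle

variable {n : ℕ}

open Classical

section Market

/-- contracts: a pair and a grid share for the P-agent. -/
abbrev Con (n N : ℕ) := Fin n × Fin n × Fin (N+1)

variable (G : RiFle n) (N : ℕ)

/-- P-payoff of a contract. -/
noncomputable def uval (z : Con n N) : ℝ :=
  if G.RigidPair z.1 z.2.1 then G.β z.1 z.2.1 else G.α z.1 z.2.1 * z.2.2 / N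

/-- Q-payoff of a contract. -/
noncomputable def vval (z : Con n N) : ℝ :=
  if G.RigidPair z.1 z.2.1 then G.γ z.1 z.2.1
  else G.α z.1 z.2.1 - G.α z.1 z.2.1 * z.2.2 / N

/-- P-side key (payoff with tie-breaking). -/
noncomputable def keyP (z : Con n N) : ℝ ×ₗ ℕ :=
  toLex (uval G N z, (z.2.1 : ℕ) * (N+1) + (z.2.2 : ℕ))

/-- Q-side key. -/
noncomputable def keyQ (z : Con n N) : ℝ ×ₗ ℕ :=
  toLex (vval G N z, (z.1 : ℕ) * (N+1) + (z.2.2 : ℕ))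

variable {G N}

lemma uval_add_vval (z : Con n N) : uval G N z + vval G N z = G.α z.1 z.2.1 := by
  unfold uval vval
  by_cases hr : G.RigidPair z.1 z.2.1 <;> simp [hr, RiFle.α]

lemma uval_nonneg (hN : 1 ≤ N) (z : Con n N) : 0 ≤ uval G N z := by
  unfold uval
  by_cases hr : G.RigidPair z.1 z.2.1
  · rw [if_pos hr]; exact G.β_nonneg _ _
  · rw [if_neg hr]
    have h0 : (0:ℝ) < N := by exact_mod_cast hN
    exact div_nonneg (mul_nonneg (G.α_nonneg _ _) (by positivity)) (le_of_lt h0)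

lemma vval_nonneg (hN : 1 ≤ N) (z : Con n N) : 0 ≤ vval G N z := by
  unfold vval
  by_cases hr : G.RigidPair z.1 z.2.1
  · rw [if_pos hr]; exact G.γ_nonneg _ _
  · rw [if_neg hr]
    have h0 : (0:ℝ) < N := by exact_mod_cast hN
    rw [sub_nonneg, div_le_iff₀ h0]
    have h1 : (z.2.2 : ℝ) ≤ N := by
      have := z.2.2.isLt
      exact_mod_cast Nat.lt_succ_iff.1 this
    nlinarith [G.α_nonneg z.1 z.2.1]

lemma uval_le (hN : 1 ≤ N) (z : Con n N) : uval G N z ≤ G.α z.1 z.2.1 := by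
  have h1 := uval_add_vval (G := G) (N := N) z
  nlinarith [vval_nonneg (G := G) (N := N) hN z]

lemma keyP_le_uval {z z' : Con n N} (h : keyP G N z ≤ keyP G N z') :
    uval G N z ≤ uval G N z' := by
  unfold keyP at h
  rcases (Prod.Lex.le_iff).1 h with h1 | ⟨h1, _⟩
  · exact le_of_lt h1
  · exact le_of_eq h1

lemma keyQ_le_vval {z z' : Con n N} (h : keyQ G N z ≤ keyQ G N z') :
    vval G N z ≤ vval G N z' := by
  unfold keyQ at h
  rcases (Prod.Lex.le_iff).1 h with h1 | ⟨h1, _⟩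
  · exact le_of_lt h1
  · exact le_of_eq h1

lemma enc_inj {a b a' b' M : ℕ} (hb : b < M) (hb' : b' < M)
    (h : a * M + b = a' * M + b') : a = a' ∧ b = b' := by
  have ha : a = a' := by
    rcases Nat.lt_trichotomy a a' with hc | hc | hc
    · exfalso
      have h2 : a * M + b < a' * M + b' := by
        calc a * M + b < a * M + M := by omega
        _ = (a+1) * M := by ring
        _ ≤ a' * M := Nat.mul_le_mul_right M hc
        _ ≤ a' * M + b' := Nat.le_add_right _ _
      omega
    · exact hc
    · exfalso
      have h2 : a' * M + b' < a * M + b := by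
        calc a' * M + b' < a' * M + M := by omega
        _ = (a'+1) * M := by ring
        _ ≤ a * M := Nat.mul_le_mul_right M hc
        _ ≤ a * M + b := Nat.le_add_right _ _
      omega
  subst ha
  omega

lemma keyP_inj {z z' : Con n N} (hag : z.1 = z'.1)
    (h1 : keyP G N z ≤ keyP G N z') (h2 : keyP G N z' ≤ keyP G N z) : z = z' := by
  have he : keyP G N z = keyP G N z' := le_antisymm h1 h2
  unfold keyP at he
  have h3 : (z.2.1 : ℕ) * (N+1) + (z.2.2 : ℕ) = (z'.2.1 : ℕ) * (N+1) + (z'.2.2 : ℕ) := by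
    have := congrArg (fun p => (ofLex p).2) he
    simpa using this
  obtain ⟨hj, hm⟩ := enc_inj z.2.2.isLt z'.2.2.isLt h3
  exact Prod.ext hag (Prod.ext (Fin.ext hj) (Fin.ext hm))

lemma keyQ_inj {z z' : Con n N} (hag : z.2.1 = z'.2.1)
    (h1 : keyQ G N z ≤ keyQ G N z') (h2 : keyQ G N z' ≤ keyQ G N z) : z = z' := by
  have he : keyQ G N z = keyQ G N z' := le_antisymm h1 h2
  unfold keyQ at he
  have h3 : (z.1 : ℕ) * (N+1) + (z.2.2 : ℕ) = (z'.1 : ℕ) * (N+1) + (z'.2.2 : ℕ) := by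
    have := congrArg (fun p => (ofLex p).2) he
    simpa using this
  obtain ⟨hi, hm⟩ := enc_inj z.2.2.isLt z'.2.2.isLt h3
  exact Prod.ext (Fin.ext hi) (Prod.ext hag (Fin.ext hm))

variable (G N)

/-- P-choice: per-agent maximal contracts. -/
def CPs (A : Set (Con n N)) : Set (Con n N) :=
  {z | z ∈ A ∧ ∀ z' ∈ A, z'.1 = z.1 → keyP G N z' ≤ keyP G N z}

def CQs (B : Set (Con n N)) : Set (Con n N) :=
  {z | z ∈ B ∧ ∀ z' ∈ B, z'.2.1 = z.2.1 → keyQ G N z' ≤ keyQ G N z}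

def RPs (A : Set (Con n N)) : Set (Con n N) := A \ CPs G N A
def RQs (B : Set (Con n N)) : Set (Con n N) := B \ CQs G N B

lemma RPs_mono : Monotone (RPs G N) := by
  intro A A' hAA z hz
  obtain ⟨hzA, hznc⟩ := hz
  refine ⟨hAA hzA, fun hc => hznc ⟨hzA, fun z' hz' hag => hc.2 z' (hAA hz') hag⟩⟩

lemma RQs_mono : Monotone (RQs G N) := by
  intro A A' hAA z hz
  obtain ⟨hzA, hznc⟩ := hz
  refine ⟨hAA hzA, fun hc => hznc ⟨hzA, fun z' hz' hag => hc.2 z' (hAA hz') hag⟩⟩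

/-- the Hatfield–Milgrom operator. -/
def HM : Set (Con n N) × (Set (Con n N))ᵒᵈ →o Set (Con n N) × (Set (Con n N))ᵒᵈ where
  toFun p := (Set.univ \ RQs G N (OrderDual.ofDual p.2),
    OrderDual.toDual (Set.univ \ RPs G N p.1))
  monotone' := by
    intro p q hpq
    exact ⟨Set.diff_subset_diff_right (RQs_mono G N hpq.2),
      Set.diff_subset_diff_right (RPs_mono G N hpq.1)⟩

/-- existence of a per-agent maximum. -/
lemma exists_P_max (A : Set (Con n N)) {z : Con n N} (hz : z ∈ A) :
    ∃ w, w ∈ CPs G N A ∧ w.1 = z.1 := by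
  have hfin : {y | y ∈ A ∧ y.1 = z.1}.Finite := Set.toFinite _
  have hne : {y | y ∈ A ∧ y.1 = z.1}.Nonempty := ⟨z, hz, rfl⟩
  obtain ⟨w, hw, hwmax⟩ := Set.Finite.exists_maximalFor (fun y => keyP G N y) _ hfin hne
  refine ⟨w, ⟨hw.1, ?_⟩, hw.2⟩
  intro z' hz' hag
  have hz'm : z' ∈ {y | y ∈ A ∧ y.1 = z.1} := ⟨hz', by rw [hag, hw.2]⟩
  rcases le_total (keyP G N z') (keyP G N w) with hle | hle
  · exact hle
  · exact hwmax hz'm hle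

lemma exists_Q_max (B : Set (Con n N)) {z : Con n N} (hz : z ∈ B) :
    ∃ w, w ∈ CQs G N B ∧ w.2.1 = z.2.1 := by
  have hfin : {y | y ∈ B ∧ y.2.1 = z.2.1}.Finite := Set.toFinite _
  have hne : {y | y ∈ B ∧ y.2.1 = z.2.1}.Nonempty := ⟨z, hz, rfl⟩
  obtain ⟨w, hw, hwmax⟩ := Set.Finite.exists_maximalFor (fun y => keyQ G N y) _ hfin hne
  refine ⟨w, ⟨hw.1, ?_⟩, hw.2⟩
  intro z' hz' hag
  have hz'm : z' ∈ {y | y ∈ B ∧ y.2.1 = z.2.1} := ⟨hz', by rw [hag, hw.2]⟩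
  rcases le_total (keyQ G N z') (keyQ G N w) with hle | hle
  · exact hle
  · exact hwmax hz'm hle

/-- A stable set of contracts in the finite market. -/
theorem market_stable : ∃ E : Set (Con n N),
    (∀ z ∈ E, ∀ z' ∈ E, z.1 = z'.1 → z = z') ∧
    (∀ z ∈ E, ∀ z' ∈ E, z.2.1 = z'.2.1 → z = z') ∧
    (∀ z : Con n N,
      (∃ w, w ∈ E ∧ w.1 = z.1 ∧ keyP G N z ≤ keyP G N w) ∨
      (∃ w, w ∈ E ∧ w.2.1 = z.2.1 ∧ keyQ G N z ≤ keyQ G N w)) := by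
  set fp := OrderHom.lfp (HM G N) with hfp
  have hfix : HM G N fp = fp := OrderHom.map_lfp (HM G N)
  set A := fp.1 with hA
  set B := OrderDual.ofDual fp.2 with hB
  have hfix1 : Set.univ \ RQs G N B = A := congrArg Prod.fst hfix
  have hfix2 : Set.univ \ RPs G N A = B := congrArg (fun p => OrderDual.ofDual p.2) hfix
  set E := A ∩ B with hE
  have hECP : E = CPs G N A := by
    ext z
    constructor
    · rintro ⟨hzA, hzB⟩
      rw [← hfix2] at hzB
      by_contra hc
      exact hzB.2 ⟨hzA, hc⟩
    · intro hz
      refine ⟨hz.1, ?_⟩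
      rw [← hfix2]
      exact ⟨Set.mem_univ z, fun hcon => hcon.2 hz⟩
  have hECQ : E = CQs G N B := by
    ext z
    constructor
    · rintro ⟨hzA, hzB⟩
      rw [← hfix1] at hzA
      by_contra hc
      exact hzA.2 ⟨hzB, hc⟩
    · intro hz
      refine ⟨?_, hz.1⟩
      rw [← hfix1]
      exact ⟨Set.mem_univ z, fun hcon => hcon.2 hz⟩
  refine ⟨E, ?_, ?_, ?_⟩
  · intro z hz z' hz' hag
    rw [hECP] at hz hz'
    exact keyP_inj hag (hz'.2 z hz.1 hag) (hz.2 z' hz'.1 hag.symm)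
  · intro z hz z' hz' hag
    rw [hECQ] at hz hz'
    exact keyQ_inj hag (hz'.2 z hz.1 hag) (hz.2 z' hz'.1 hag.symm)
  · intro z
    by_cases hzA : z ∈ A
    · left
      obtain ⟨w, hw, hwag⟩ := exists_P_max G N A hzA
      exact ⟨w, by rw [hECP]; exact hw, hwag, hw.2 z hzA hwag.symm⟩
    · right
      have hzB : z ∈ RQs G N B := by
        rw [← hfix1] at hzA
        by_contra hc
        exact hzA ⟨Set.mem_univ z, hc⟩
      obtain ⟨w, hw, hwag⟩ := exists_Q_max G N B hzB.1
      exact ⟨w, by rw [hECQ]; exact hw, hwag, hw.2 z hzB.1 hwag.symm⟩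

end Market

end RiFle

-- ===== module M5b =====

open Finset
namespace RiFle

variable {n : ℕ}

open Classical

/-- approximate pairwise stability, with relative slack `e` on flexible pairs. -/
structure IsPWe (G : RiFle n) (e : ℝ) (μ : Fin n → Option (Fin n))
    (u v : Fin n → ℝ) : Prop where
  matching : Matching μ
  u_nonneg : ∀ i, 0 ≤ u i
  v_nonneg : ∀ j, 0 ≤ v j
  u_unm : ∀ i, μ i = none → u i = 0
  v_unm : ∀ j, (∀ i, μ i ≠ some j) → v j = 0
  pair_sum : ∀ i j, μ i = some j → u i + v j = G.α i j
  pair_rp : ∀ i j, μ i = some j → G.rigidP i → u i = G.β i j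
  pair_rq : ∀ i j, μ i = some j → G.rigidQ j → v j = G.γ i j
  nb_flex : ∀ i j, ¬ G.RigidPair i j → G.α i j ≤ u i + v j + e * G.α i j
  nb_rig : ∀ i j, G.RigidPair i j → G.β i j ≤ u i ∨ G.γ i j ≤ v j

set_option maxHeartbeats 1000000 in
/-- the finite market yields an approximately stable outcome. -/
theorem eps_outcome (G : RiFle n) (N : ℕ) (hN : 1 ≤ N) :
    ∃ μ u v, G.IsPWe (2 / N) μ u v := by
  obtain ⟨E, hP1, hQ1, hblock⟩ := market_stable G N
  have hN0 : (0:ℝ) < N := by exact_mod_cast hN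
  set μs : Fin n → Option (Fin n) := fun i =>
    if h : ∃ z, z ∈ E ∧ z.1 = i then some (choose h).2.1 else none with hμdef
  set us : Fin n → ℝ := fun i =>
    if h : ∃ z, z ∈ E ∧ z.1 = i then uval G N (choose h) else 0 with hudef
  set vs : Fin n → ℝ := fun j =>
    if h : ∃ z, z ∈ E ∧ z.2.1 = j then vval G N (choose h) else 0 with hvdef
  -- extraction lemmas
  have hP : ∀ z, z ∈ E → μs z.1 = some z.2.1 ∧ us z.1 = uval G N z := by
    intro z hz
    have hex : ∃ w, w ∈ E ∧ w.1 = z.1 := ⟨z, hz, rfl⟩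
    have hw := choose_spec hex
    have hwz : choose hex = z := hP1 _ hw.1 z hz hw.2
    constructor
    · simp only [hμdef]
      rw [dif_pos hex, hwz]
    · simp only [hudef]
      rw [dif_pos hex, hwz]
  have hQ : ∀ z, z ∈ E → vs z.2.1 = vval G N z := by
    intro z hz
    have hex : ∃ w, w ∈ E ∧ w.2.1 = z.2.1 := ⟨z, hz, rfl⟩
    have hw := choose_spec hex
    have hwz : choose hex = z := hQ1 _ hw.1 z hz hw.2
    simp only [hvdef]
    rw [dif_pos hex, hwz]
  have hPn : ∀ i, ¬ (∃ z, z ∈ E ∧ z.1 = i) → μs i = none ∧ us i = 0 := by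
    intro i hex
    constructor
    · simp only [hμdef]; rw [dif_neg hex]
    · simp only [hudef]; rw [dif_neg hex]
  have hQn : ∀ j, ¬ (∃ z, z ∈ E ∧ z.2.1 = j) → vs j = 0 := by
    intro j hex
    simp only [hvdef]; rw [dif_neg hex]
  have hsome : ∀ i j, μs i = some j →
      ∃ z, z ∈ E ∧ z.1 = i ∧ z.2.1 = j ∧ us i = uval G N z ∧ vs j = vval G N z := by
    intro i j hm
    by_cases hex : ∃ z, z ∈ E ∧ z.1 = i
    · obtain ⟨z, hz, hzi⟩ := hex
      have h1 := (hP z hz).1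
      rw [hzi, hm] at h1
      have hj : z.2.1 = j := by simpa using h1.symm
      refine ⟨z, hz, hzi, hj, ?_, ?_⟩
      · rw [← hzi]; exact (hP z hz).2
      · rw [← hj]; exact hQ z hz
    · rw [(hPn i hex).1] at hm; cases hm
  have hu0 : ∀ i, 0 ≤ us i := by
    intro i
    by_cases hex : ∃ z, z ∈ E ∧ z.1 = i
    · obtain ⟨z, hz, hzi⟩ := hex
      rw [← hzi, (hP z hz).2]
      exact uval_nonneg hN z
    · rw [(hPn i hex).2]
  have hv0 : ∀ j, 0 ≤ vs j := by
    intro j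
    by_cases hex : ∃ z, z ∈ E ∧ z.2.1 = j
    · obtain ⟨z, hz, hzj⟩ := hex
      rw [← hzj, hQ z hz]
      exact vval_nonneg hN z
    · rw [hQn j hex]
  have hbv : ∀ z : Con n N, uval G N z ≤ us z.1 ∨ vval G N z ≤ vs z.2.1 := by
    intro z
    rcases hblock z with ⟨w, hwE, hag, hkey⟩ | ⟨w, hwE, hag, hkey⟩
    · left
      rw [← hag, (hP w hwE).2]
      exact keyP_le_uval hkey
    · right
      rw [← hag, hQ w hwE]
      exact keyQ_le_vval hkey
  refine ⟨μs, us, vs, ?_, hu0, hv0, ?_, ?_, ?_, ?_, ?_, ?_, ?_⟩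
  · -- matching
    intro i i' j hm hm'
    obtain ⟨z, hz, hz1, hz2, _, _⟩ := hsome i j hm
    obtain ⟨z', hz', hz1', hz2', _, _⟩ := hsome i' j hm'
    have : z = z' := hQ1 z hz z' hz' (by rw [hz2, hz2'])
    rw [← hz1, ← hz1', this]
  · -- u_unm
    intro i hm
    by_cases hex : ∃ z, z ∈ E ∧ z.1 = i
    · exfalso
      obtain ⟨z, hz, hzi⟩ := hex
      rw [← hzi, (hP z hz).1] at hm
      cases hm
    · exact (hPn i hex).2
  · -- v_unm
    intro j hm
    by_cases hex : ∃ z, z ∈ E ∧ z.2.1 = j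
    · exfalso
      obtain ⟨z, hz, hzj⟩ := hex
      exact hm z.1 (by rw [(hP z hz).1, hzj])
    · exact hQn j hex
  · -- pair_sum
    intro i j hm
    obtain ⟨z, hz, hz1, hz2, hu, hv⟩ := hsome i j hm
    rw [hu, hv, ← hz1, ← hz2]
    exact uval_add_vval z
  · -- pair_rp
    intro i j hm hrp
    obtain ⟨z, hz, hz1, hz2, hu, _⟩ := hsome i j hm
    rw [hu, ← hz1, ← hz2]
    unfold uval
    rw [if_pos (show G.RigidPair z.1 z.2.1 from Or.inl (by rwa [hz1]))]
  · -- pair_rq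
    intro i j hm hrq
    obtain ⟨z, hz, hz1, hz2, _, hv⟩ := hsome i j hm
    rw [hv, ← hz1, ← hz2]
    unfold vval
    rw [if_pos (show G.RigidPair z.1 z.2.1 from Or.inr (by rwa [hz2]))]
  · -- approximate no-blocking for flexible pairs
    intro i j hflex
    rcases eq_or_lt_of_le (G.α_nonneg i j) with hα | hα
    · rw [← hα]
      simp only [mul_zero]
      linarith [hu0 i, hv0 j]
    · by_contra hc
      push_neg at hc
      clear hP hQ hPn hQn hsome hP1 hQ1 hblock hμdef hudef hvdef
      clear_value μs us vs
      set a := G.α i j with ha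
      have hslack : us i + vs j < a - 2 / N * a := by linarith
      have hslackN : us i * N + vs j * N < a * N - 2 * a := by
        have h1 := mul_lt_mul_of_pos_right hslack hN0
        have h2N : (a - 2 / (N:ℝ) * a) * N = a * N - 2 * a := by field_simp
        nlinarith [h1]
      set t := us i * N / a with ht
      have ht0 : 0 ≤ t := div_nonneg (mul_nonneg (hu0 i) hN0.le) hα.le
      have he : us i * N = a * t := by rw [ht]; field_simp
      set m0 : ℕ := Nat.floor t + 1 with hm0
      have htm : t < (m0 : ℝ) := by
        rw [hm0]
        push_cast
        exact Nat.lt_floor_add_one t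
      have hm0t : (m0 : ℝ) ≤ t + 1 := by
        rw [hm0]
        push_cast
        have := Nat.floor_le ht0
        linarith
      have hm0N' : m0 < N := by
        have h1 : a * (m0:ℝ) < a * N := by
          nlinarith [mul_le_mul_of_nonneg_left hm0t hα.le, hv0 j]
        have h2 : (m0:ℝ) < N := (mul_lt_mul_iff_right₀ hα).1 h1
        exact_mod_cast h2
      have hub : us i < uval G N (i, j, ⟨m0, by omega⟩) := by
        unfold uval
        rw [if_neg hflex]
        show us i < a * (m0:ℝ) / N
        rw [lt_div_iff₀ hN0]
        nlinarith [mul_lt_mul_of_pos_left htm hα]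
      have hvb : vs j < vval G N (i, j, ⟨m0, by omega⟩) := by
        unfold vval
        rw [if_neg hflex]
        show vs j < a - a * (m0:ℝ) / N
        have key : a * (m0:ℝ) / N < a - vs j := by
          rw [div_lt_iff₀ hN0]
          nlinarith [mul_le_mul_of_nonneg_left hm0t hα.le]
        linarith
      rcases hbv (i, j, ⟨m0, by omega⟩) with h1 | h1
      · exact absurd h1 (not_le.2 hub)
      · exact absurd h1 (not_le.2 hvb)
  · -- exact no-blocking for rigid pairs
    intro i j hrig
    have h1 := hbv (i, j, ⟨0, by omega⟩)
    unfold uval vval at h1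
    rw [if_pos (show G.RigidPair (i, j, (⟨0, by omega⟩ : Fin (N+1))).1
        (i, j, (⟨0, by omega⟩ : Fin (N+1))).2.1 from hrig),
      if_pos (show G.RigidPair (i, j, (⟨0, by omega⟩ : Fin (N+1))).1
        (i, j, (⟨0, by omega⟩ : Fin (N+1))).2.1 from hrig)] at h1
    exact h1

end RiFle

-- ===== module M5c =====

open Finset
namespace RiFle

variable {n : ℕ} {G : RiFle n} {μ : Fin n → Option (Fin n)} {u v : Fin n → ℝ} {e e' : ℝ}

open Classical

lemma IsPWe.mono (hee : e ≤ e') (h : G.IsPWe e μ u v) : G.IsPWe e' μ u v :=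
  ⟨h.matching, h.u_nonneg, h.v_nonneg, h.u_unm, h.v_unm, h.pair_sum, h.pair_rp, h.pair_rq,
    fun i j hf => le_trans (h.nb_flex i j hf)
      (by nlinarith [G.α_nonneg i j]),
    h.nb_rig⟩

lemma IsPWe.isPW (h : G.IsPWe 0 μ u v) : G.IsPW μ u v :=
  ⟨h.matching, h.u_nonneg, h.v_nonneg, h.u_unm, h.v_unm, h.pair_sum, h.pair_rp, h.pair_rq,
    fun i j hf => by have := h.nb_flex i j hf; linarith,
    h.nb_rig⟩

lemma IsPWe.u_le_bnd (h : G.IsPWe e μ u v) (i : Fin n) : u i ≤ G.bnd := by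
  cases hm : μ i with
  | none => rw [h.u_unm i hm]; exact G.bnd_nonneg
  | some j =>
      have := h.pair_sum i j hm
      have := h.v_nonneg j
      have := G.α_le_bnd i j
      linarith

lemma IsPWe.v_le_bnd (h : G.IsPWe e μ u v) (j : Fin n) : v j ≤ G.bnd := by
  by_cases hm : ∃ i, μ i = some j
  · obtain ⟨i, hi⟩ := hm
    have := h.pair_sum i j hi
    have := h.u_nonneg i
    have := G.α_le_bnd i j
    linarith
  · rw [h.v_unm j (fun i hc => hm ⟨i, hc⟩)]
    exact G.bnd_nonneg

lemma isClosed_PWe (G : RiFle n) (e : ℝ) (μ : Fin n → Option (Fin n)) :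
    IsClosed {p : (Fin n → ℝ) × (Fin n → ℝ) | G.IsPWe e μ p.1 p.2} := by
  have cu : ∀ i : Fin n, Continuous fun p : (Fin n → ℝ) × (Fin n → ℝ) => p.1 i :=
    fun i => (continuous_apply i).comp continuous_fst
  have cv : ∀ j : Fin n, Continuous fun p : (Fin n → ℝ) × (Fin n → ℝ) => p.2 j :=
    fun j => (continuous_apply j).comp continuous_snd
  have heq : {p : (Fin n → ℝ) × (Fin n → ℝ) | G.IsPWe e μ p.1 p.2} =
      {p : (Fin n → ℝ) × (Fin n → ℝ) | Matching μ} ∩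
      ((⋂ i, {p | 0 ≤ p.1 i}) ∩ (⋂ j, {p | 0 ≤ p.2 j}) ∩
       (⋂ i, {p | μ i = none → p.1 i = 0}) ∩
       (⋂ j, {p | (∀ i, μ i ≠ some j) → p.2 j = 0}) ∩
       (⋂ i, ⋂ j, {p | μ i = some j → p.1 i + p.2 j = G.α i j}) ∩
       (⋂ i, ⋂ j, {p | μ i = some j → G.rigidP i → p.1 i = G.β i j}) ∩
       (⋂ i, ⋂ j, {p | μ i = some j → G.rigidQ j → p.2 j = G.γ i j}) ∩
       (⋂ i, ⋂ j, {p | ¬ G.RigidPair i j → G.α i j ≤ p.1 i + p.2 j + e * G.α i j}) ∩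
       (⋂ i, ⋂ j, {p | G.RigidPair i j → G.β i j ≤ p.1 i ∨ G.γ i j ≤ p.2 j})) := by
    ext p
    simp only [Set.mem_inter_iff, Set.mem_iInter, Set.mem_setOf_eq]
    constructor
    · intro h
      exact ⟨h.matching, ⟨⟨⟨⟨⟨⟨⟨⟨h.u_nonneg, h.v_nonneg⟩, h.u_unm⟩, h.v_unm⟩,
        fun i j => h.pair_sum i j⟩, fun i j => h.pair_rp i j⟩,
        fun i j => h.pair_rq i j⟩, fun i j => h.nb_flex i j⟩, fun i j => h.nb_rig i j⟩⟩
    · rintro ⟨h0, ⟨⟨⟨⟨⟨⟨⟨⟨h1, h2⟩, h3⟩, h4⟩, h5⟩, h6⟩, h7⟩, h8⟩, h9⟩⟩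
      exact ⟨h0, h1, h2, h3, h4, h5, h6, h7, h8, h9⟩
  rw [heq]
  refine IsClosed.inter ?_ ?_
  · by_cases hM : Matching μ <;> simp [hM]
  refine (((((((((isClosed_iInter fun i => isClosed_le continuous_const (cu i)).inter
    (isClosed_iInter fun j => isClosed_le continuous_const (cv j))).inter
    (isClosed_iInter fun i => isClosed_imp _ (isClosed_eq (cu i) continuous_const))).inter
    (isClosed_iInter fun j => isClosed_imp _ (isClosed_eq (cv j) continuous_const))).inter
    (isClosed_iInter fun i => isClosed_iInter fun j =>
      isClosed_imp _ (isClosed_eq ((cu i).add (cv j)) continuous_const))).inter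
    (isClosed_iInter fun i => isClosed_iInter fun j =>
      isClosed_imp _ (isClosed_imp _ (isClosed_eq (cu i) continuous_const)))).inter
    (isClosed_iInter fun i => isClosed_iInter fun j =>
      isClosed_imp _ (isClosed_imp _ (isClosed_eq (cv j) continuous_const)))).inter
    (isClosed_iInter fun i => isClosed_iInter fun j =>
      isClosed_imp _ (isClosed_le continuous_const (((cu i).add (cv j)).add
        continuous_const)))).inter
    (isClosed_iInter fun i => isClosed_iInter fun j => isClosed_imp _
      ((isClosed_le continuous_const (cu i)).union (isClosed_le continuous_const (cv j)))))

/-- existence of an exactly stable outcome. -/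
theorem stable_exists (G : RiFle n) :
    ∃ (μ : Fin n → Option (Fin n)) (u v : Fin n → ℝ), G.IsPW μ u v := by
  set T : ℕ → Set ((Fin n → ℝ) × (Fin n → ℝ)) :=
    fun k => {p | ∃ μ, G.IsPWe (2 / (k+1 : ℕ)) μ p.1 p.2} with hT
  have hanti : ∀ k k' : ℕ, k ≤ k' → T k' ⊆ T k := by
    intro k k' hkk p hp
    obtain ⟨μ, hμ⟩ := hp
    refine ⟨μ, hμ.mono ?_⟩
    apply div_le_div_of_nonneg_left (by norm_num) (by positivity)
    exact_mod_cast Nat.succ_le_succ hkk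
  have hTne : ∀ k, (T k).Nonempty := by
    intro k
    obtain ⟨μ, u, v, h⟩ := eps_outcome G (k+1) (by omega)
    exact ⟨(u, v), μ, by exact_mod_cast h⟩
  have hTclosed : ∀ k, IsClosed (T k) := by
    intro k
    have : T k = ⋃ μ : Fin n → Option (Fin n),
        {p : (Fin n → ℝ) × (Fin n → ℝ) | G.IsPWe (2 / (k+1 : ℕ)) μ p.1 p.2} := by
      ext p
      simp only [hT, Set.mem_setOf_eq, Set.mem_iUnion]
    rw [this]
    exact isClosed_iUnion_of_finite fun μ => isClosed_PWe G _ μ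
  have hTcomp : ∀ k, IsCompact (T k) := by
    intro k
    refine IsCompact.of_isClosed_subset (isCompact_Icc (a := ((fun _ => 0, fun _ => 0) :
        (Fin n → ℝ) × (Fin n → ℝ))) (b := (fun _ => G.bnd, fun _ => G.bnd)))
      (hTclosed k) ?_
    rintro p ⟨μ, h⟩
    constructor
    · exact ⟨fun i => h.u_nonneg i, fun j => h.v_nonneg j⟩
    · exact ⟨fun i => h.u_le_bnd i, fun j => h.v_le_bnd j⟩
  have hint : (⋂ k, T k).Nonempty := by
    apply IsCompact.nonempty_iInter_of_directed_nonempty_isCompact_isClosed T ?_ hTne hTcomp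
      hTclosed
    intro k k'
    exact ⟨max k k', hanti k (max k k') (le_max_left _ _),
      hanti k' (max k k') (le_max_right _ _)⟩
  obtain ⟨p, hp⟩ := hint
  simp only [Set.mem_iInter] at hp
  -- choose a matching that works infinitely often
  set f : ℕ → (Fin n → Option (Fin n)) := fun k => choose (hp k) with hf
  have hfk : ∀ k, G.IsPWe (2 / (k+1 : ℕ)) (f k) p.1 p.2 := fun k => choose_spec (hp k)
  obtain ⟨μ0, hμ0⟩ := Finite.exists_infinite_fiber f
  have hinf : (f ⁻¹' {μ0}).Infinite := Set.infinite_coe_iff.1 hμ0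
  have hub : ∀ K : ℕ, ∃ k, K < k ∧ f k = μ0 := by
    intro K
    obtain ⟨k, hk1, hk2⟩ := hinf.exists_gt K
    exact ⟨k, hk2, hk1⟩
  obtain ⟨k0, _, hk0⟩ := hub 0
  have h0 := hfk k0
  rw [hk0] at h0
  refine ⟨μ0, p.1, p.2, h0.matching, h0.u_nonneg, h0.v_nonneg, h0.u_unm, h0.v_unm,
    h0.pair_sum, h0.pair_rp, h0.pair_rq, ?_, h0.nb_rig⟩
  -- exact no-blocking in the limit
  intro i j hflex
  by_contra hc
  push_neg at hc
  set a := G.α i j with ha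
  have ha0 : 0 ≤ a := G.α_nonneg i j
  have hd : 0 < a - (p.1 i + p.2 j) := by linarith
  obtain ⟨K, hK⟩ := exists_nat_gt (2 * a / (a - (p.1 i + p.2 j)))
  obtain ⟨k, hKk, hfkμ⟩ := hub K
  have hk := hfk k
  rw [hfkμ] at hk
  have hnb := hk.nb_flex i j hflex
  rw [← ha] at hnb
  have hKpos : 0 < (K:ℝ) + 1 := by positivity
  have hkpos : 0 < (k:ℝ) + 1 := by positivity
  have h1 : 2 * a / ((k:ℝ)+1) < a - (p.1 i + p.2 j) := by
    have h2 : 2 * a / ((k:ℝ)+1) ≤ 2 * a / ((K:ℝ)+1) := by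
      apply div_le_div_of_nonneg_left (by linarith) hKpos
      have : (K:ℝ) < k := by exact_mod_cast hKk
      linarith
    have h3 : 2 * a / ((K:ℝ)+1) < a - (p.1 i + p.2 j) := by
      rw [div_lt_iff₀ hKpos]
      have h4 : 2 * a / (a - (p.1 i + p.2 j)) < K := hK
      rw [div_lt_iff₀ hd] at h4
      nlinarith
    linarith
  have h5 : 2 / ((k:ℕ)+1 : ℕ) * a = 2 * a / ((k:ℝ)+1) := by
    push_cast
    ring
  rw [h5] at hnb
  linarith

end RiFle

-- ===== module M6 =====

open Finset
namespace RiFle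

variable {n : ℕ}

open Classical

theorem stmt12' (G : RiFle n) (hnd : G.NonDegenerate) :
    IsCompact {p : (Fin n → ℝ) × (Fin n → ℝ) |
      ∃ μ : Fin n → Option (Fin n), G.Stable μ p.1 p.2} ∧
    (∃! w : (Fin n → Option (Fin n)) × (Fin n → ℝ) × (Fin n → ℝ),
      G.Stable w.1 w.2.1 w.2.2 ∧
      ∀ (μ' : Fin n → Option (Fin n)) (u' v' : Fin n → ℝ), G.Stable μ' u' v' →
        (∀ i, u' i ≤ w.2.1 i) ∧ (∀ j, w.2.2 j ≤ v' j)) ∧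
    (∃! w : (Fin n → Option (Fin n)) × (Fin n → ℝ) × (Fin n → ℝ),
      G.Stable w.1 w.2.1 w.2.2 ∧
      ∀ (μ' : Fin n → Option (Fin n)) (u' v' : Fin n → ℝ), G.Stable μ' u' v' →
        (∀ i, w.2.1 i ≤ u' i) ∧ (∀ j, v' j ≤ w.2.2 j)) := by
  set S : Set ((Fin n → ℝ) × (Fin n → ℝ)) :=
    {p | ∃ μ : Fin n → Option (Fin n), G.Stable μ p.1 p.2} with hS
  have hScomp : IsCompact S := G.stablePayoffs_compact
  have hSne : S.Nonempty := by
    obtain ⟨μ, u, v, h⟩ := stable_exists G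
    exact ⟨(u, v), μ, h.stable⟩
  refine ⟨hScomp, ?_, ?_⟩
  · -- P-optimal stable outcome
    have hf : ContinuousOn (fun p : (Fin n → ℝ) × (Fin n → ℝ) =>
        (∑ i, p.1 i) - ∑ j, p.2 j) S := by
      apply Continuous.continuousOn
      apply Continuous.sub
      · exact continuous_finset_sum _ (fun i _ => (continuous_apply i).comp continuous_fst)
      · exact continuous_finset_sum _ (fun j _ => (continuous_apply j).comp continuous_snd)
    obtain ⟨p, hpS, hpmax⟩ := hScomp.exists_isMaxOn hSne hf
    obtain ⟨μ0, hμ0⟩ := hpS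
    have h0 : G.IsPW μ0 p.1 p.2 := hμ0.isPW
    have hdom : ∀ (μ' : Fin n → Option (Fin n)) (u' v' : Fin n → ℝ), G.Stable μ' u' v' →
        (∀ i, u' i ≤ p.1 i) ∧ (∀ j, p.2 j ≤ v' j) := by
      intro μ' u' v' hst
      have h' : G.IsPW μ' u' v' := hst.isPW
      obtain ⟨μb, hb⟩ := join_exists hnd h0 h'
      have hbS : (fun i => max (p.1 i) (u' i), fun j => min (p.2 j) (v' j)) ∈ S :=
        ⟨μb, hb.stable⟩
      have hle := hpmax hbS
      simp only [Set.mem_setOf_eq] at hle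
      have hA : ∀ i, 0 ≤ max (p.1 i) (u' i) - p.1 i :=
        fun i => by simp [le_max_left]
      have hB : ∀ j, 0 ≤ p.2 j - min (p.2 j) (v' j) :=
        fun j => by simp [min_le_left]
      have hsum : (∑ i, (max (p.1 i) (u' i) - p.1 i)) +
          (∑ j, (p.2 j - min (p.2 j) (v' j))) ≤ 0 := by
        rw [Finset.sum_sub_distrib, Finset.sum_sub_distrib]
        have : (∑ i, max (p.1 i) (u' i)) - (∑ j, min (p.2 j) (v' j)) ≤
            (∑ i, p.1 i) - ∑ j, p.2 j := hle
        linarith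
      have hA0 : ∀ i, max (p.1 i) (u' i) - p.1 i = 0 := by
        intro i
        have h1 : ∑ i, (max (p.1 i) (u' i) - p.1 i) = 0 := by
          have g1 : 0 ≤ ∑ i, (max (p.1 i) (u' i) - p.1 i) :=
            Finset.sum_nonneg fun i _ => hA i
          have g2 : 0 ≤ ∑ j, (p.2 j - min (p.2 j) (v' j)) :=
            Finset.sum_nonneg fun j _ => hB j
          linarith
        exact (Finset.sum_eq_zero_iff_of_nonneg (fun i _ => hA i)).1 h1 i (mem_univ i)
      have hB0 : ∀ j, p.2 j - min (p.2 j) (v' j) = 0 := by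
        intro j
        have h1 : ∑ j, (p.2 j - min (p.2 j) (v' j)) = 0 := by
          have g1 : 0 ≤ ∑ i, (max (p.1 i) (u' i) - p.1 i) :=
            Finset.sum_nonneg fun i _ => hA i
          have g2 : 0 ≤ ∑ j, (p.2 j - min (p.2 j) (v' j)) :=
            Finset.sum_nonneg fun j _ => hB j
          linarith
        exact (Finset.sum_eq_zero_iff_of_nonneg (fun j _ => hB j)).1 h1 j (mem_univ j)
      constructor
      · intro i
        have := hA0 i
        have h2 : max (p.1 i) (u' i) = p.1 i := by linarith
        rw [← h2]
        exact le_max_right _ _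
      · intro j
        have := hB0 j
        have h2 : min (p.2 j) (v' j) = p.2 j := by linarith
        rw [← h2]
        exact min_le_right _ _
    refine ⟨(μ0, p.1, p.2), ⟨hμ0, hdom⟩, ?_⟩
    rintro ⟨μ2, u2, v2⟩ ⟨hst2, hdom2⟩
    have hu : u2 = p.1 := by
      funext i
      exact le_antisymm ((hdom μ2 u2 v2 hst2).1 i) ((hdom2 μ0 p.1 p.2 hμ0).1 i)
    have hv : v2 = p.2 := by
      funext j
      exact le_antisymm ((hdom2 μ0 p.1 p.2 hμ0).2 j) ((hdom μ2 u2 v2 hst2).2 j)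
    subst hu; subst hv
    have : μ2 = μ0 := matching_eq_of_payoff_eq hnd hst2.isPW h0
    rw [this]
  · -- Q-optimal stable outcome
    have hf : ContinuousOn (fun p : (Fin n → ℝ) × (Fin n → ℝ) =>
        (∑ j, p.2 j) - ∑ i, p.1 i) S := by
      apply Continuous.continuousOn
      apply Continuous.sub
      · exact continuous_finset_sum _ (fun j _ => (continuous_apply j).comp continuous_snd)
      · exact continuous_finset_sum _ (fun i _ => (continuous_apply i).comp continuous_fst)
    obtain ⟨p, hpS, hpmax⟩ := hScomp.exists_isMaxOn hSne hf
    obtain ⟨μ0, hμ0⟩ := hpS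
    have h0 : G.IsPW μ0 p.1 p.2 := hμ0.isPW
    have hdom : ∀ (μ' : Fin n → Option (Fin n)) (u' v' : Fin n → ℝ), G.Stable μ' u' v' →
        (∀ i, p.1 i ≤ u' i) ∧ (∀ j, v' j ≤ p.2 j) := by
      intro μ' u' v' hst
      have h' : G.IsPW μ' u' v' := hst.isPW
      obtain ⟨μt, hb⟩ := meet_exists hnd h0 h'
      have hbS : (fun i => min (p.1 i) (u' i), fun j => max (p.2 j) (v' j)) ∈ S :=
        ⟨μt, hb.stable⟩
      have hle := hpmax hbS
      simp only [Set.mem_setOf_eq] at hle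
      have hA : ∀ j, 0 ≤ max (p.2 j) (v' j) - p.2 j :=
        fun j => by simp [le_max_left]
      have hB : ∀ i, 0 ≤ p.1 i - min (p.1 i) (u' i) :=
        fun i => by simp [min_le_left]
      have hsum : (∑ j, (max (p.2 j) (v' j) - p.2 j)) +
          (∑ i, (p.1 i - min (p.1 i) (u' i))) ≤ 0 := by
        rw [Finset.sum_sub_distrib, Finset.sum_sub_distrib]
        have : (∑ j, max (p.2 j) (v' j)) - (∑ i, min (p.1 i) (u' i)) ≤
            (∑ j, p.2 j) - ∑ i, p.1 i := hle
        linarith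
      have hA0 : ∀ j, max (p.2 j) (v' j) - p.2 j = 0 := by
        intro j
        have h1 : ∑ j, (max (p.2 j) (v' j) - p.2 j) = 0 := by
          have g1 : 0 ≤ ∑ j, (max (p.2 j) (v' j) - p.2 j) :=
            Finset.sum_nonneg fun j _ => hA j
          have g2 : 0 ≤ ∑ i, (p.1 i - min (p.1 i) (u' i)) :=
            Finset.sum_nonneg fun i _ => hB i
          linarith
        exact (Finset.sum_eq_zero_iff_of_nonneg (fun j _ => hA j)).1 h1 j (mem_univ j)
      have hB0 : ∀ i, p.1 i - min (p.1 i) (u' i) = 0 := by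
        intro i
        have h1 : ∑ i, (p.1 i - min (p.1 i) (u' i)) = 0 := by
          have g1 : 0 ≤ ∑ j, (max (p.2 j) (v' j) - p.2 j) :=
            Finset.sum_nonneg fun j _ => hA j
          have g2 : 0 ≤ ∑ i, (p.1 i - min (p.1 i) (u' i)) :=
            Finset.sum_nonneg fun i _ => hB i
          linarith
        exact (Finset.sum_eq_zero_iff_of_nonneg (fun i _ => hB i)).1 h1 i (mem_univ i)
      constructor
      · intro i
        have := hB0 i
        have h2 : min (p.1 i) (u' i) = p.1 i := by linarith
        rw [← h2]
        exact min_le_right _ _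
      · intro j
        have := hA0 j
        have h2 : max (p.2 j) (v' j) = p.2 j := by linarith
        rw [← h2]
        exact le_max_right _ _
    refine ⟨(μ0, p.1, p.2), ⟨hμ0, hdom⟩, ?_⟩
    rintro ⟨μ2, u2, v2⟩ ⟨hst2, hdom2⟩
    have hu : u2 = p.1 := by
      funext i
      exact le_antisymm ((hdom2 μ0 p.1 p.2 hμ0).1 i) ((hdom μ2 u2 v2 hst2).1 i)
    have hv : v2 = p.2 := by
      funext j
      exact le_antisymm ((hdom μ2 u2 v2 hst2).2 j) ((hdom2 μ0 p.1 p.2 hμ0).2 j)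
    subst hu; subst hv
    have : μ2 = μ0 := matching_eq_of_payoff_eq hnd hst2.isPW h0
    rw [this]

end RiFle

/-- in a non-degenerate game the set of stable outcomes is a compact
lattice under P-preferences; in particular there is a unique P-optimal stable
outcome and a unique Q-optimal stable outcome. -/
theorem stmt12 {n : ℕ} (G : RiFle n) (hnd : G.NonDegenerate) :
    IsCompact {p : (Fin n → ℝ) × (Fin n → ℝ) |
      ∃ μ : Fin n → Option (Fin n), G.Stable μ p.1 p.2} ∧
    (∃! w : (Fin n → Option (Fin n)) × (Fin n → ℝ) × (Fin n → ℝ),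
      G.Stable w.1 w.2.1 w.2.2 ∧
      ∀ (μ' : Fin n → Option (Fin n)) (u' v' : Fin n → ℝ), G.Stable μ' u' v' →
        (∀ i, u' i ≤ w.2.1 i) ∧ (∀ j, w.2.2 j ≤ v' j)) ∧
    (∃! w : (Fin n → Option (Fin n)) × (Fin n → ℝ) × (Fin n → ℝ),
      G.Stable w.1 w.2.1 w.2.2 ∧
      ∀ (μ' : Fin n → Option (Fin n)) (u' v' : Fin n → ℝ), G.Stable μ' u' v' →
        (∀ i, w.2.1 i ≤ u' i) ∧ (∀ j, v' j ≤ w.2.2 j)) := by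
  exact G.stmt12' hnd
end

section
/- The set of stable outcomes of the RiFle assignment game is nonempty. -/
open Finset

namespace RiFleExist

open RiFle

set_option linter.unusedSectionVars false

noncomputable section
open scoped Classical

/-! ### An abstract "stable allocation of contracts" theorem (Hatfield–Milgrom style). -/

section Abstract
variable {C I J : Type} [Fintype C] (pAg : C → I) (qAg : C → J)
  (fP fQ : C → Lex (ℝ × ℕ))

/-- Contracts of `Y` rejected by their agent (under key `f`, agent map `ag`). -/
def Rej {K : Type} (ag : C → K) (f : C → Lex (ℝ × ℕ)) (Y : Set C) : Set C :=
  {x | x ∈ Y ∧ ∃ y ∈ Y, ag y = ag x ∧ f x < f y}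

lemma Rej_mono {K : Type} (ag : C → K) (f : C → Lex (ℝ × ℕ)) : Monotone (Rej ag f) := by
  intro Y Z h x hx
  exact ⟨h hx.1, hx.2.imp fun y hy => ⟨h hy.1, hy.2⟩⟩

lemma exists_greatest (s : Set C) (hs : s.Nonempty) (f : C → Lex (ℝ × ℕ)) :
    ∃ z ∈ s, ∀ w ∈ s, f w ≤ f z := by
  obtain ⟨z, hz, hmax⟩ := Set.Finite.exists_maximalFor f s (Set.toFinite s) hs
  refine ⟨z, hz, fun w hw => ?_⟩
  rcases le_total (f w) (f z) with h | h
  · exact h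
  · exact hmax hw h

theorem abstract_alloc (fP_inj : Function.Injective fP) (fQ_inj : Function.Injective fQ) :
    ∃ A : Set C,
      (∀ x ∈ A, ∀ x' ∈ A, pAg x = pAg x' → x = x') ∧
      (∀ x ∈ A, ∀ x' ∈ A, qAg x = qAg x' → x = x') ∧
      (∀ x : C, (∃ z ∈ A, pAg z = pAg x ∧ fP x ≤ fP z) ∨
                (∃ z ∈ A, qAg z = qAg x ∧ fQ x ≤ fQ z)) := by
  set φ : Set C →o Set C :=
    ⟨fun Y => (Rej pAg fP ((Rej qAg fQ Y)ᶜ))ᶜ, by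
      intro Y Z h
      exact Set.compl_subset_compl.2 (Rej_mono pAg fP
        (Set.compl_subset_compl.2 (Rej_mono qAg fQ h)))⟩ with hφ
  set XQ : Set C := OrderHom.lfp φ with hXQ
  set XP : Set C := (Rej qAg fQ XQ)ᶜ with hXP
  have hfix : (Rej pAg fP XP)ᶜ = XQ := OrderHom.map_lfp φ
  set A : Set C := XP ∩ XQ with hA
  have uniqP : ∀ x ∈ A, ∀ x' ∈ A, pAg x = pAg x' → x = x' := by
    intro x hx x' hx' hag
    have h1 : x ∈ (Rej pAg fP XP)ᶜ := by rw [hfix]; exact hx.2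
    have h2 : x' ∈ (Rej pAg fP XP)ᶜ := by rw [hfix]; exact hx'.2
    have hn1 : ¬ fP x < fP x' := fun hlt => h1 ⟨hx.1, x', hx'.1, hag.symm, hlt⟩
    have hn2 : ¬ fP x' < fP x := fun hlt => h2 ⟨hx'.1, x, hx.1, hag, hlt⟩
    exact fP_inj (le_antisymm (not_lt.1 hn2) (not_lt.1 hn1))
  have uniqQ : ∀ x ∈ A, ∀ x' ∈ A, qAg x = qAg x' → x = x' := by
    intro x hx x' hx' hag
    have h1 : x ∉ Rej qAg fQ XQ := hx.1
    have h2 : x' ∉ Rej qAg fQ XQ := hx'.1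
    have hn1 : ¬ fQ x < fQ x' := fun hlt => h1 ⟨hx.2, x', hx'.2, hag.symm, hlt⟩
    have hn2 : ¬ fQ x' < fQ x := fun hlt => h2 ⟨hx'.2, x, hx.2, hag, hlt⟩
    exact fQ_inj (le_antisymm (not_lt.1 hn2) (not_lt.1 hn1))
  refine ⟨A, uniqP, uniqQ, fun x => ?_⟩
  by_cases hxP : x ∈ XP
  · by_cases hxQ : x ∈ XQ
    · exact Or.inl ⟨x, ⟨hxP, hxQ⟩, rfl, le_rfl⟩
    · left
      set s : Set C := {y | y ∈ XP ∧ pAg y = pAg x} with hs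
      have hsne : s.Nonempty := ⟨x, hxP, rfl⟩
      obtain ⟨z, ⟨hzXP, hzag⟩, hzmax⟩ := exists_greatest s hsne fP
      have hzA : z ∈ A := by
        refine ⟨hzXP, ?_⟩
        rw [← hfix]
        rintro (⟨-, y, hyXP, hyag, hlt⟩ : z ∈ Rej pAg fP XP)
        exact absurd (hzmax y ⟨hyXP, hyag.trans hzag⟩) (not_le.2 hlt)
      exact ⟨z, hzA, hzag, hzmax x ⟨hxP, rfl⟩⟩
  · right
    have hxR : x ∈ Rej qAg fQ XQ := by simpa [hXP] using hxP
    have hxQ : x ∈ XQ := hxR.1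
    set s : Set C := {y | y ∈ XQ ∧ qAg y = qAg x} with hs
    have hsne : s.Nonempty := ⟨x, hxQ, rfl⟩
    obtain ⟨z, ⟨hzXQ, hzag⟩, hzmax⟩ := exists_greatest s hsne fQ
    have hzA : z ∈ A := by
      refine ⟨?_, hzXQ⟩
      rw [hXP]
      rintro (⟨-, y, hyXQ, hyag, hlt⟩ : z ∈ Rej qAg fQ XQ)
      exact absurd (hzmax y ⟨hyXQ, hyag.trans hzag⟩) (not_le.2 hlt)
    exact ⟨z, hzA, hzag, hzmax x ⟨hxQ, rfl⟩⟩

end Abstract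

/-! ### The concrete contract market for a RiFle game at grid size δ. -/

variable {n : ℕ}

section Delta
variable (G : RiFle n) (δ : ℝ)

lemma α_nonneg (i j : Fin n) : 0 ≤ G.α i j :=
  add_nonneg (G.β_nonneg i j) (G.γ_nonneg i j)

/-- total value bound -/
def M : ℝ := ∑ i : Fin n, ∑ j : Fin n, G.α i j

lemma M_nonneg : 0 ≤ M G :=
  Finset.sum_nonneg fun i _ => Finset.sum_nonneg fun j _ => α_nonneg G i j

lemma α_le_M (i j : Fin n) : G.α i j ≤ M G := by
  calc G.α i j ≤ ∑ j', G.α i j' :=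
        Finset.single_le_sum (fun j' _ => α_nonneg G i j') (mem_univ j)
    _ ≤ M G :=
        Finset.single_le_sum (f := fun i' => ∑ j', G.α i' j')
          (fun i' _ => Finset.sum_nonneg fun j' _ => α_nonneg G i' j') (mem_univ i)

def NN : ℕ := ⌈M G / δ⌉₊ + 1

abbrev Con := Fin n × Fin n × Fin (NN G δ + 1)

def payP (x : Con G δ) : ℝ :=
  if G.RigidPair x.1 x.2.1 then G.β x.1 x.2.1
  else min ((x.2.2 : ℕ) * δ) (G.α x.1 x.2.1)

def payQ (x : Con G δ) : ℝ := G.α x.1 x.2.1 - payP G δ x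

lemma payP_add_payQ (x : Con G δ) : payP G δ x + payQ G δ x = G.α x.1 x.2.1 := by
  simp [payQ]

lemma payP_rigid {x : Con G δ} (h : G.RigidPair x.1 x.2.1) : payP G δ x = G.β x.1 x.2.1 := by
  simp [payP, h]

lemma payQ_rigid {x : Con G δ} (h : G.RigidPair x.1 x.2.1) : payQ G δ x = G.γ x.1 x.2.1 := by
  simp [payQ, payP, h, RiFle.α]

lemma payP_flex {x : Con G δ} (h : ¬ G.RigidPair x.1 x.2.1) :
    payP G δ x = min ((x.2.2 : ℕ) * δ) (G.α x.1 x.2.1) := by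
  simp [payP, h]

lemma payP_nonneg (hδ : 0 < δ) (x : Con G δ) : 0 ≤ payP G δ x := by
  by_cases h : G.RigidPair x.1 x.2.1
  · rw [payP_rigid G δ h]; exact G.β_nonneg _ _
  · rw [payP_flex G δ h]
    exact le_min (mul_nonneg (Nat.cast_nonneg _) hδ.le) (α_nonneg G _ _)

lemma payQ_nonneg (x : Con G δ) : 0 ≤ payQ G δ x := by
  by_cases h : G.RigidPair x.1 x.2.1
  · rw [payQ_rigid G δ h]; exact G.γ_nonneg _ _
  · rw [payQ, payP_flex G δ h]; simp [min_le_right]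

lemma payP_le_α (x : Con G δ) : payP G δ x ≤ G.α x.1 x.2.1 := by
  by_cases h : G.RigidPair x.1 x.2.1
  · rw [payP_rigid G δ h, RiFle.α]; nlinarith [G.γ_nonneg x.1 x.2.1]
  · rw [payP_flex G δ h]; exact min_le_right _ _

def enc (x : Con G δ) : ℕ := ((Fintype.equivFin (Con G δ)) x : ℕ)

lemma enc_inj : Function.Injective (enc G δ) := by
  intro x y h
  exact (Fintype.equivFin (Con G δ)).injective (Fin.val_injective h)

def fP (x : Con G δ) : Lex (ℝ × ℕ) := toLex (payP G δ x, enc G δ x)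
def fQ (x : Con G δ) : Lex (ℝ × ℕ) := toLex (payQ G δ x, enc G δ x)

lemma fP_inj : Function.Injective (fP G δ) := by
  intro x y h
  exact enc_inj G δ (congrArg (fun z => (ofLex z).2) h)

lemma fQ_inj : Function.Injective (fQ G δ) := by
  intro x y h
  exact enc_inj G δ (congrArg (fun z => (ofLex z).2) h)

lemma payP_le_of_fP_le {x y : Con G δ} (h : fP G δ x ≤ fP G δ y) :
    payP G δ x ≤ payP G δ y := by
  rcases Prod.Lex.le_iff.1 h with h | ⟨h, _⟩
  · exact h.le
  · exact h.le

lemma payQ_le_of_fQ_le {x y : Con G δ} (h : fQ G δ x ≤ fQ G δ y) :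
    payQ G δ x ≤ payQ G δ y := by
  rcases Prod.Lex.le_iff.1 h with h | ⟨h, _⟩
  · exact h.le
  · exact h.le

/-! ### From an allocation of contracts to an outcome. -/

variable (A : Set (Con G δ))

def pk (i : Fin n) : Option (Con G δ) :=
  if h : ∃ x, x ∈ A ∧ x.1 = i then some h.choose else none

def pkQ (j : Fin n) : Option (Con G δ) :=
  if h : ∃ x, x ∈ A ∧ x.2.1 = j then some h.choose else none

def μδ (i : Fin n) : Option (Fin n) := (pk G δ A i).map fun x => x.2.1
def uδ (i : Fin n) : ℝ := (pk G δ A i).elim 0 (payP G δ)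
def vδ (j : Fin n) : ℝ := (pkQ G δ A j).elim 0 (payQ G δ)

lemma pk_spec {i : Fin n} {x : Con G δ} (h : pk G δ A i = some x) : x ∈ A ∧ x.1 = i := by
  rw [pk] at h
  split at h
  · next hex => obtain rfl : hex.choose = x := Option.some.inj h; exact hex.choose_spec
  · exact absurd h (by simp)

lemma pkQ_spec {j : Fin n} {x : Con G δ} (h : pkQ G δ A j = some x) : x ∈ A ∧ x.2.1 = j := by
  rw [pkQ] at h
  split at h
  · next hex => obtain rfl : hex.choose = x := Option.some.inj h; exact hex.choose_spec
  · exact absurd h (by simp)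

variable {A}

lemma pk_eq (huP : ∀ x ∈ A, ∀ x' ∈ A, x.1 = x'.1 → x = x') {x : Con G δ} (hx : x ∈ A) :
    pk G δ A x.1 = some x := by
  have hex : ∃ y, y ∈ A ∧ y.1 = x.1 := ⟨x, hx, rfl⟩
  rw [pk, dif_pos hex]
  exact congrArg some (huP _ hex.choose_spec.1 x hx hex.choose_spec.2)

lemma pkQ_eq (huQ : ∀ x ∈ A, ∀ x' ∈ A, x.2.1 = x'.2.1 → x = x') {x : Con G δ} (hx : x ∈ A) :
    pkQ G δ A x.2.1 = some x := by
  have hex : ∃ y, y ∈ A ∧ y.2.1 = x.2.1 := ⟨x, hx, rfl⟩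
  rw [pkQ, dif_pos hex]
  exact congrArg some (huQ _ hex.choose_spec.1 x hx hex.choose_spec.2)

lemma sum_pk (huP : ∀ x ∈ A, ∀ x' ∈ A, x.1 = x'.1 → x = x') (f : Con G δ → ℝ) :
    ∑ i, (pk G δ A i).elim 0 f = ∑ x ∈ (Set.toFinite A).toFinset, f x := by
  rw [← Finset.sum_fiberwise (Set.toFinite A).toFinset (fun x => x.1) f]
  refine Finset.sum_congr rfl fun i _ => ?_
  rcases hpk : pk G δ A i with - | x
  · rw [Finset.sum_eq_zero]
    · simp
    · intro x hx
      simp only [Finset.mem_filter, Set.Finite.mem_toFinset] at hx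
      have := pk_eq G δ huP hx.1
      rw [hx.2] at this
      rw [this] at hpk; exact absurd hpk (by simp)
  · obtain ⟨hxA, hxi⟩ := pk_spec G δ A hpk
    have : (Set.toFinite A).toFinset.filter (fun y => y.1 = i) = {x} := by
      ext y
      simp only [Finset.mem_filter, Set.Finite.mem_toFinset, Finset.mem_singleton]
      constructor
      · rintro ⟨hyA, hyi⟩
        exact huP y hyA x hxA (by rw [hyi, hxi])
      · rintro rfl; exact ⟨hxA, hxi⟩
    rw [this, Finset.sum_singleton]
    simp

lemma sum_pkQ (huQ : ∀ x ∈ A, ∀ x' ∈ A, x.2.1 = x'.2.1 → x = x') (f : Con G δ → ℝ) :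
    ∑ j, (pkQ G δ A j).elim 0 f = ∑ x ∈ (Set.toFinite A).toFinset, f x := by
  rw [← Finset.sum_fiberwise (Set.toFinite A).toFinset (fun x => x.2.1) f]
  refine Finset.sum_congr rfl fun j _ => ?_
  rcases hpk : pkQ G δ A j with - | x
  · rw [Finset.sum_eq_zero]
    · simp
    · intro x hx
      simp only [Finset.mem_filter, Set.Finite.mem_toFinset] at hx
      have := pkQ_eq G δ huQ hx.1
      rw [hx.2] at this
      rw [this] at hpk; exact absurd hpk (by simp)
  · obtain ⟨hxA, hxj⟩ := pkQ_spec G δ A hpk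
    have : (Set.toFinite A).toFinset.filter (fun y => y.2.1 = j) = {x} := by
      ext y
      simp only [Finset.mem_filter, Set.Finite.mem_toFinset, Finset.mem_singleton]
      constructor
      · rintro ⟨hyA, hyj⟩
        exact huQ y hyA x hxA (by rw [hyj, hxj])
      · rintro rfl; exact ⟨hxA, hxj⟩
    rw [this, Finset.sum_singleton]
    simp

end Delta

/-! ### Existence of δ-approximately stable outcomes. -/

lemma exists_approx (G : RiFle n) {δ : ℝ} (hδ : 0 < δ) :
    ∃ μ u v, G.Feasible μ u v ∧
      (∀ i j, G.RigidPair i j → G.β i j ≤ u i ∨ G.γ i j ≤ v j) ∧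
      (∀ i j, ¬ G.RigidPair i j → G.α i j ≤ u i + v j + δ) := by
  obtain ⟨A, uniqP, uniqQ, key⟩ :=
    abstract_alloc (fun x : Con G δ => x.1) (fun x => x.2.1) (fP G δ) (fQ G δ)
      (fP_inj G δ) (fQ_inj G δ)
  have huP : ∀ x ∈ A, ∀ x' ∈ A, x.1 = x'.1 → x = x' :=
    fun x hx x' hx' h => uniqP x hx x' hx' h
  have huQ : ∀ x ∈ A, ∀ x' ∈ A, x.2.1 = x'.2.1 → x = x' :=
    fun x hx x' hx' h => uniqQ x hx x' hx' h
  set μ := μδ G δ A with hμ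
  set u := uδ G δ A with hu
  set v := vδ G δ A with hv
  -- the master inequality
  have key' : ∀ x : Con G δ, payP G δ x ≤ u x.1 ∨ payQ G δ x ≤ v x.2.1 := by
    intro x
    rcases key x with ⟨z, hzA, hzag, hle⟩ | ⟨z, hzA, hzag, hle⟩
    · left
      have : u z.1 = payP G δ z := by rw [hu, uδ, pk_eq G δ huP hzA]; rfl
      rw [← hzag, this]
      exact payP_le_of_fP_le G δ hle
    · right
      have : v z.2.1 = payQ G δ z := by rw [hv, vδ, pkQ_eq G δ huQ hzA]; rfl
      rw [← hzag, this]
      exact payQ_le_of_fQ_le G δ hle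
  have hu_nonneg : ∀ i, 0 ≤ u i := by
    intro i
    rw [hu, uδ]
    rcases pk G δ A i with - | x
    · simp
    · exact payP_nonneg G δ hδ x
  have hv_nonneg : ∀ j, 0 ≤ v j := by
    intro j
    rw [hv, vδ]
    rcases pkQ G δ A j with - | x
    · simp
    · exact payQ_nonneg G δ x
  have hu_le_M : ∀ i, u i ≤ M G := by
    intro i
    rw [hu, uδ]
    rcases hpk : pk G δ A i with - | x
    · simpa using M_nonneg G
    · simpa using (payP_le_α G δ x).trans (α_le_M G x.1 x.2.1)
  -- matched contract facts
  have hmatch : ∀ i j, μ i = some j → ∃ x, pk G δ A i = some x ∧ x ∈ A ∧ x.1 = i ∧ x.2.1 = j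
        ∧ u i = payP G δ x ∧ v j = payQ G δ x := by
    intro i j hij
    rw [hμ, μδ, Option.map_eq_some_iff] at hij
    obtain ⟨x, hpk, hx21⟩ := hij
    obtain ⟨hxA, hx1⟩ := pk_spec G δ A hpk
    refine ⟨x, hpk, hxA, hx1, hx21, ?_, ?_⟩
    · rw [hu, uδ, hpk]; rfl
    · have := pkQ_eq G δ huQ hxA
      rw [hx21] at this
      rw [hv, vδ, this]; rfl
  refine ⟨μ, u, v, ⟨?_, hu_nonneg, hv_nonneg, ?_, ?_, ?_⟩, ?_, ?_⟩
  · -- Matching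
    intro i i' j hi hi'
    obtain ⟨x, -, hxA, hx1, hx21, -, -⟩ := hmatch i j hi
    obtain ⟨x', -, hx'A, hx'1, hx'21, -, -⟩ := hmatch i' j hi'
    have : x = x' := huQ x hxA x' hx'A (by rw [hx21, hx'21])
    rw [← hx1, ← hx'1, this]
  · -- rigidP condition
    intro i j hij hri
    obtain ⟨x, -, hxA, hx1, hx21, hux, hvx⟩ := hmatch i j hij
    have hrig : G.RigidPair x.1 x.2.1 := Or.inl (hx1 ▸ hri)
    constructor
    · rw [hux, payP_rigid G δ hrig, hx1, hx21]
    · intro _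
      rw [hvx, payQ_rigid G δ hrig, hx1, hx21]
  · -- rigidQ condition
    intro i j hij hrj
    obtain ⟨x, -, hxA, hx1, hx21, hux, hvx⟩ := hmatch i j hij
    have hrig : G.RigidPair x.1 x.2.1 := Or.inr (hx21 ▸ hrj)
    constructor
    · rw [hvx, payQ_rigid G δ hrig, hx1, hx21]
    · intro _
      rw [hux, payP_rigid G δ hrig, hx1, hx21]
  · -- the sum condition
    have h1 : ∑ i, u i = ∑ x ∈ (Set.toFinite A).toFinset, payP G δ x := by
      rw [hu]; exact sum_pk G δ huP (payP G δ)
    have h2 : ∑ j, v j = ∑ x ∈ (Set.toFinite A).toFinset, payQ G δ x := by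
      rw [hv]; exact sum_pkQ G δ huQ (payQ G δ)
    have h3 : ∑ i, (μ i).elim 0 (fun j => G.α i j)
        = ∑ x ∈ (Set.toFinite A).toFinset, G.α x.1 x.2.1 := by
      rw [← sum_pk G δ huP (fun x => G.α x.1 x.2.1)]
      refine Finset.sum_congr rfl fun i _ => ?_
      rw [hμ, μδ]
      rcases hpk : pk G δ A i with - | x
      · simp
      · obtain ⟨-, hx1⟩ := pk_spec G δ A hpk
        simp [hx1]
    rw [h1, h2, h3, ← Finset.sum_add_distrib]
    exact Finset.sum_congr rfl fun x _ => payP_add_payQ G δ x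
  · -- rigid stability
    intro i j hrig
    have := key' (i, j, (0 : Fin (NN G δ + 1)))
    rwa [payP_rigid G δ hrig, payQ_rigid G δ hrig] at this
  · -- flexible δ-stability
    intro i j hflex
    by_contra hcon
    push_neg at hcon
    have hui : 0 ≤ u i := hu_nonneg i
    have hvj : 0 ≤ v j := hv_nonneg j
    set k : ℕ := ⌊u i / δ⌋₊ + 1 with hk
    have hk1 : u i < k * δ := by
      have := Nat.lt_floor_add_one (u i / δ)
      rw [div_lt_iff₀ hδ] at this
      simpa [hk] using this
    have hk2 : (k : ℝ) * δ ≤ u i + δ := by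
      have hfl : (⌊u i / δ⌋₊ : ℝ) ≤ u i / δ := Nat.floor_le (div_nonneg hui hδ.le)
      have : (k : ℝ) = (⌊u i / δ⌋₊ : ℝ) + 1 := by rw [hk]; push_cast; ring
      rw [this, add_mul, one_mul]
      have := mul_le_mul_of_nonneg_right hfl hδ.le
      rw [div_mul_cancel₀ _ hδ.ne'] at this
      linarith
    have hkN : k < NN G δ + 1 := by
      have h1 : ⌊u i / δ⌋₊ ≤ ⌈M G / δ⌉₊ :=
        le_trans (Nat.floor_mono (by gcongr; exact hu_le_M i)) (Nat.floor_le_ceil _)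
      rw [NN]
      omega
    set x : Con G δ := (i, j, ⟨k, hkN⟩) with hx
    have hxflex : ¬ G.RigidPair x.1 x.2.1 := hflex
    have hkδα : (k : ℝ) * δ ≤ G.α i j := by linarith
    have hpPx : payP G δ x = k * δ := by
      rw [payP_flex G δ hxflex]
      simpa [hx] using min_eq_left hkδα
    have hpQx : payQ G δ x = G.α i j - k * δ := by
      rw [payQ, hpPx]
    rcases key' x with h | h
    · rw [hpPx] at h
      exact absurd h (not_le.2 hk1)
    · rw [hpQx] at h
      have : v x.2.1 = v j := rfl
      rw [this] at h
      linarith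
end
end RiFleExist

/-- every RiFle assignment game has a stable outcome. -/
theorem stmt13 {n : ℕ} (G : RiFle n) :
    ∃ (μ : Fin n → Option (Fin n)) (u v : Fin n → ℝ), G.Stable μ u v := by
  classical
  -- Step 1: a single matching works for every tolerance δ > 0.
  have exuniform : ∃ μ : Fin n → Option (Fin n), ∀ δ : ℝ, 0 < δ →
      ∃ u v, G.Feasible μ u v ∧
        (∀ i j, G.RigidPair i j → G.β i j ≤ u i ∨ G.γ i j ≤ v j) ∧
        (∀ i j, ¬ G.RigidPair i j → G.α i j ≤ u i + v j + δ) := by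
    by_contra h
    have h' : ∀ μ : Fin n → Option (Fin n), ∃ δ : ℝ, 0 < δ ∧ ¬ ∃ u v, G.Feasible μ u v ∧
        (∀ i j, G.RigidPair i j → G.β i j ≤ u i ∨ G.γ i j ≤ v j) ∧
        (∀ i j, ¬ G.RigidPair i j → G.α i j ≤ u i + v j + δ) := by
      intro μ'
      by_contra hμ'
      push_neg at hμ'
      exact h ⟨μ', fun δ hδ => hμ' δ hδ⟩
    choose d hd0 hdP using h'
    obtain ⟨b, -, hb⟩ := Finset.exists_min_image Finset.univ d
      ⟨fun _ => none, Finset.mem_univ _⟩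
    obtain ⟨μ0, u, v, h1, h2, h3⟩ := RiFleExist.exists_approx G (hd0 b)
    refine hdP μ0 ⟨u, v, h1, h2, fun i j hf => le_trans (h3 i j hf) ?_⟩
    have hbb := hb μ0 (Finset.mem_univ μ0)
    linarith
  obtain ⟨μ, hμ⟩ := exuniform
  -- Step 2: compactness.
  let X := (Fin n → ℝ) × (Fin n → ℝ)
  have hXdef : X = ((Fin n → ℝ) × (Fin n → ℝ)) := rfl
  have cu : ∀ i : Fin n, Continuous fun p : X => p.1 i :=
    fun i => (continuous_apply i).comp continuous_fst
  have cv : ∀ j : Fin n, Continuous fun p : X => p.2 j :=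
    fun j => (continuous_apply j).comp continuous_snd
  have himp : ∀ (P : Prop) (s : Set X), IsClosed s → IsClosed {p : X | P → p ∈ s} := by
    intro P s hs
    by_cases hP : P
    · convert hs using 1; ext p; simp [hP]
    · convert isClosed_univ (X := X) using 1; ext p; simp [hP]
  set S : Set X := {p | G.Feasible μ p.1 p.2 ∧
      ∀ i j, G.RigidPair i j → G.β i j ≤ p.1 i ∨ G.γ i j ≤ p.2 j} with hS
  have hSne : S.Nonempty := by
    obtain ⟨u, v, h1, h2, -⟩ := hμ 1 one_pos
    exact ⟨(u, v), h1, h2⟩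
  -- closedness
  have hSclosed : IsClosed S := by
    have hE : S =
        {p : X | RiFle.Matching μ} ∩
        (⋂ i, {p : X | 0 ≤ p.1 i}) ∩
        (⋂ j, {p : X | 0 ≤ p.2 j}) ∩
        (⋂ i, ⋂ j, {p : X | μ i = some j → p ∈ {q : X | G.rigidP i → q ∈
            ({q : X | q.1 i = G.β i j} ∩ {q : X | ¬ G.rigidQ j → q ∈ {r : X | G.γ i j ≤ r.2 j}})}}) ∩
        (⋂ i, ⋂ j, {p : X | μ i = some j → p ∈ {q : X | G.rigidQ j → q ∈
            ({q : X | q.2 j = G.γ i j} ∩ {q : X | ¬ G.rigidP i → q ∈ {r : X | G.β i j ≤ r.1 i}})}}) ∩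
        {p : X | (∑ i, p.1 i) + (∑ j, p.2 j) = ∑ i, (μ i).elim 0 (fun j => G.α i j)} ∩
        (⋂ i, ⋂ j, {p : X | G.RigidPair i j → p ∈
            ({q : X | G.β i j ≤ q.1 i} ∪ {q : X | G.γ i j ≤ q.2 j})}) := by
      ext p
      simp only [hS, Set.mem_inter_iff, Set.mem_iInter, Set.mem_setOf_eq, Set.mem_union,
        RiFle.Feasible]
      tauto
    rw [hE]
    refine IsClosed.inter (IsClosed.inter (IsClosed.inter (IsClosed.inter (IsClosed.inter
      (IsClosed.inter ?_ ?_) ?_) ?_) ?_) ?_) ?_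
    · by_cases hm : RiFle.Matching μ
      · convert isClosed_univ (X := X) using 1; ext p; simp [hm]
      · convert isClosed_empty (X := X) using 1; ext p; simp [hm]
    · exact isClosed_iInter fun i => isClosed_le continuous_const (cu i)
    · exact isClosed_iInter fun j => isClosed_le continuous_const (cv j)
    · refine isClosed_iInter fun i => isClosed_iInter fun j => himp _ _ (himp _ _ ?_)
      exact (isClosed_eq (cu i) continuous_const).inter
        (himp _ _ (isClosed_le continuous_const (cv j)))
    · refine isClosed_iInter fun i => isClosed_iInter fun j => himp _ _ (himp _ _ ?_)
      exact (isClosed_eq (cv j) continuous_const).inter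
        (himp _ _ (isClosed_le continuous_const (cu i)))
    · exact isClosed_eq ((continuous_finset_sum _ fun i _ => cu i).add
        (continuous_finset_sum _ fun j _ => cv j)) continuous_const
    · refine isClosed_iInter fun i => isClosed_iInter fun j => himp _ _ ?_
      exact (isClosed_le continuous_const (cu i)).union (isClosed_le continuous_const (cv j))
  -- boundedness
  have hbound : ∀ p ∈ S, ∀ i : Fin n, p.1 i ≤ RiFleExist.M G ∧ p.2 i ≤ RiFleExist.M G := by
    rintro p ⟨⟨-, hu0, hv0, -, -, hsum⟩, -⟩ i
    have htot : ∑ i, (μ i).elim 0 (fun j => G.α i j) ≤ RiFleExist.M G := by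
      refine Finset.sum_le_sum fun i _ => ?_
      rcases hμi : μ i with - | j
      · simpa using Finset.sum_nonneg fun j _ => RiFleExist.α_nonneg G i j
      · simpa using Finset.single_le_sum (fun j' _ => RiFleExist.α_nonneg G i j') (mem_univ j)
    have h1 : ∑ i, p.1 i + ∑ j, p.2 j ≤ RiFleExist.M G := hsum ▸ htot
    have h2 : 0 ≤ ∑ j, p.2 j := Finset.sum_nonneg fun j _ => hv0 j
    have h3 : 0 ≤ ∑ i, p.1 i := Finset.sum_nonneg fun i _ => hu0 i
    constructor
    · have := Finset.single_le_sum (fun i' _ => hu0 i') (mem_univ i)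
      linarith
    · have := Finset.single_le_sum (fun j' _ => hv0 j') (mem_univ i)
      linarith
  have hSsub : S ⊆ Set.Icc ((fun _ => 0, fun _ => 0) : X)
      ((fun _ => RiFleExist.M G, fun _ => RiFleExist.M G) : X) := by
    rintro p hp
    have hu0 : ∀ i, 0 ≤ p.1 i := hp.1.2.1
    have hv0 : ∀ j, 0 ≤ p.2 j := hp.1.2.2.1
    constructor
    · exact ⟨fun i => hu0 i, fun j => hv0 j⟩
    · exact ⟨fun i => (hbound p hp i).1, fun j => (hbound p hp j).2⟩
  have hScompact : IsCompact S := isCompact_Icc.of_isClosed_subset hSclosed hSsub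
  -- the residual blocking function
  set g : X → ℝ := fun p => ∑ i, ∑ j,
      if G.RigidPair i j then 0 else max 0 (G.α i j - p.1 i - p.2 j) with hg
  have hgcont : Continuous g := by
    refine continuous_finset_sum _ fun i _ => continuous_finset_sum _ fun j _ => ?_
    by_cases hr : G.RigidPair i j
    · simpa [hr] using continuous_const (X := X) (Y := ℝ)
    · simp only [hr, if_false]
      exact continuous_const.max ((continuous_const.sub (cu i)).sub (cv j))
  obtain ⟨p₀, hp₀S, hp₀min⟩ := hScompact.exists_isMinOn hSne hgcont.continuousOn
  have hgsmall : ∀ δ : ℝ, 0 < δ → g p₀ ≤ (n * n : ℝ) * δ := by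
    intro δ hδ
    obtain ⟨u, v, h1, h2, h3⟩ := hμ δ hδ
    have hpS : ((u, v) : X) ∈ S := ⟨h1, h2⟩
    have hb : g (u, v) ≤ (n * n : ℝ) * δ := by
      have : ∀ i j : Fin n,
          (if G.RigidPair i j then (0:ℝ) else max 0 (G.α i j - u i - v j)) ≤ δ := by
        intro i j
        by_cases hr : G.RigidPair i j
        · simpa [hr] using hδ.le
        · simp only [hr, if_false]
          exact max_le hδ.le (by have := h3 i j hr; linarith)
      calc g (u, v) ≤ ∑ i : Fin n, ∑ j : Fin n, δ := by
            exact Finset.sum_le_sum fun i _ => Finset.sum_le_sum fun j _ => this i j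
        _ = (n * n : ℝ) * δ := by
            simp [Finset.sum_const, Finset.card_univ]
            ring
    exact le_trans (hp₀min hpS) hb
  have hgnonneg : 0 ≤ g p₀ := by
    refine Finset.sum_nonneg fun i _ => Finset.sum_nonneg fun j _ => ?_
    by_cases hr : G.RigidPair i j <;> simp [hr]
  have hgzero : g p₀ = 0 := by
    refine le_antisymm ?_ hgnonneg
    by_contra hpos
    push_neg at hpos
    set q : ℝ := (n * n : ℝ) with hq
    have hq0 : 0 ≤ q := by positivity
    set t : ℝ := g p₀ / (q + 1) with ht
    have ht0 : 0 < t := div_pos hpos (by linarith)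
    have heq : t * (q + 1) = g p₀ := div_mul_cancel₀ _ (by linarith)
    have hle : g p₀ ≤ q * t := hgsmall t ht0
    nlinarith
  -- extract termwise vanishing
  have hterm : ∀ i j, ¬ G.RigidPair i j → G.α i j ≤ p₀.1 i + p₀.2 j := by
    intro i j hr
    have houter : ∀ i' ∈ Finset.univ, (0:ℝ) ≤ ∑ j', (if G.RigidPair i' j' then (0:ℝ)
        else max 0 (G.α i' j' - p₀.1 i' - p₀.2 j')) :=
      fun i' _ => Finset.sum_nonneg fun j' _ => by
        by_cases hr' : G.RigidPair i' j' <;> simp [hr']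
    have hinner0 := (Finset.sum_eq_zero_iff_of_nonneg houter).1 hgzero i (mem_univ i)
    have hinner : ∀ j' ∈ Finset.univ, (0:ℝ) ≤ (if G.RigidPair i j' then (0:ℝ)
        else max 0 (G.α i j' - p₀.1 i - p₀.2 j')) :=
      fun j' _ => by by_cases hr' : G.RigidPair i j' <;> simp [hr']
    have hterm0 := (Finset.sum_eq_zero_iff_of_nonneg hinner).1 hinner0 j (mem_univ j)
    rw [if_neg hr] at hterm0
    have : G.α i j - p₀.1 i - p₀.2 j ≤ 0 := by
      have := le_max_right (0:ℝ) (G.α i j - p₀.1 i - p₀.2 j)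
      rw [hterm0] at this
      linarith
    linarith
  exact ⟨μ, p₀.1, p₀.2, hp₀S.1, hterm, hp₀S.2⟩
end

section
/- In the RiFle assignment game with all data integral, if at termination of the auction algorithm the map μ is injective and μ(p_i) ∈ D_i for every i (where D_i is the set of Q-agents of maximal value f_{ij}(v_j) to p_i at price vector v), and payoffs are defined by u_i = β_{ij}+γ_{ij}−v_j for flexible matched pairs and u_i = β_{ij} for rigid matched pairs, then the resulting outcome is stable provided all u_i, v_j ≥ 0. -/
open Finset

open scoped Classical

namespace RiFle

/-- The value `f_{ij}(v j)` of `q j` to `p i` at prices `v`, given the current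
(tentative) proposal map `μ`. -/
noncomputable def fval {n : ℕ} (G : RiFle n) (μ : Fin n → Option (Fin n))
    (v : Fin n → ℝ) (i j : Fin n) : ℝ :=
  if G.RigidPair i j then
    (if v j < G.γ i j ∨ (v j = G.γ i j ∧ μ i = some j) then G.β i j else 0)
  else G.α i j - v j

end RiFle

/-- (correctness of the auction algorithm, integral data) if at
termination the proposal map `μ` is injective, every `p i` proposes to a Q-agent of
maximal value `μ i ∈ D i`, rigid matched pairs get their prescribed shares, and all
payoffs are nonnegative, then the resulting outcome is stable. -/
theorem stmt14 {n : ℕ} (G : RiFle n)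
    (hβint : ∀ i j, ∃ z : ℤ, G.β i j = z) (hγint : ∀ i j, ∃ z : ℤ, G.γ i j = z)
    (μ : Fin n → Fin n) (hinj : Function.Injective μ)
    (v : Fin n → ℝ) (hvint : ∀ j, ∃ z : ℤ, v j = z)
    (hD : ∀ i j, G.fval (fun i => some (μ i)) v i j ≤ G.fval (fun i => some (μ i)) v i (μ i))
    (u : Fin n → ℝ)
    (hu : ∀ i, u i = if G.RigidPair i (μ i) then G.β i (μ i) else G.α i (μ i) - v (μ i))
    (hrig : ∀ i, G.RigidPair i (μ i) → v (μ i) = G.γ i (μ i))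
    (hunn : ∀ i, 0 ≤ u i) (hvnn : ∀ j, 0 ≤ v j) :
    G.Stable (fun i => some (μ i)) u v := by
  have hfμ : ∀ i, G.fval (fun i => some (μ i)) v i (μ i) = u i := by
    intro i
    rw [hu i]
    unfold RiFle.fval
    by_cases h : G.RigidPair i (μ i)
    · simp [h, hrig i h]
    · simp [h]
  have huv : ∀ i, u i + v (μ i) = G.α i (μ i) := by
    intro i
    rw [hu i]
    by_cases h : G.RigidPair i (μ i)
    · simp only [h, if_true]
      rw [hrig i h]; rfl
    · simp [h]
  refine ⟨⟨?_, hunn, hvnn, ?_, ?_, ?_⟩, ?_, ?_⟩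
  · intro i i' j hi hi'
    exact hinj ((Option.some_injective _ hi).trans (Option.some_injective _ hi').symm)
  · intro i j hij hri
    have hj : μ i = j := Option.some_injective _ hij
    subst hj
    have h : G.RigidPair i (μ i) := Or.inl hri
    refine ⟨by rw [hu i]; simp [h], fun _ => le_of_eq (hrig i h).symm⟩
  · intro i j hij hrj
    have hj : μ i = j := Option.some_injective _ hij
    subst hj
    have h : G.RigidPair i (μ i) := Or.inr hrj
    exact ⟨hrig i h, fun _ => le_of_eq (by rw [hu i]; simp [h])⟩
  · have hbij : Function.Bijective μ := (Finite.injective_iff_bijective).mp hinj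
    have : (∑ j, v j) = ∑ i, v (μ i) :=
      (Fintype.sum_bijective μ hbij _ _ (fun i => rfl)).symm
    rw [this, ← Finset.sum_add_distrib]
    simp only [Option.elim]
    exact Finset.sum_congr rfl (fun i _ => huv i)
  · intro i j hnr
    have := hD i j
    rw [hfμ i] at this
    unfold RiFle.fval at this
    simp only [hnr, if_false] at this
    linarith
  · intro i j hr
    have := hD i j
    rw [hfμ i] at this
    unfold RiFle.fval at this
    simp only [hr, if_true] at this
    by_cases hlt : v j < G.γ i j
    · left; rw [if_pos (Or.inl hlt)] at this; exact this
    · by_cases heq : v j = G.γ i j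
      · right; exact heq.ge
      · right; push_neg at hlt; exact hlt
end

section
/- In the marriage model with strict preferences, if μ and μ' are two stable matchings, then the set of unmatched agents is the same under μ and μ'. -/
/-- Stability in the marriage model. Preferences are encoded by utility values:
man `i` values woman `j` at `Pm i j` (acceptable iff the value is positive, being
single has value 0), and symmetrically for women. A matching is stable if everyone
is matched acceptably and there is no blocking pair. -/
def MarriageStable {a b : ℕ} (Pm : Fin a → Fin b → ℝ) (Pw : Fin b → Fin a → ℝ)
    (μ : Fin a → Option (Fin b)) : Prop :=
  (∀ i i' j, μ i = some j → μ i' = some j → i = i') ∧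
  (∀ i j, μ i = some j → 0 < Pm i j ∧ 0 < Pw j i) ∧
  ¬ ∃ i j, μ i ≠ some j ∧
    (∀ j', μ i = some j' → Pm i j' < Pm i j) ∧ (μ i = none → 0 < Pm i j) ∧
    (∀ i', μ i' = some j → Pw j i' < Pw j i) ∧ ((∀ i', μ i' ≠ some j) → 0 < Pw j i)

/-- `i` is matched to `j` under `μ` and prefers `j` to his situation under `ν`. -/
def MarC {a b : ℕ} (Pm : Fin a → Fin b → ℝ) (μ ν : Fin a → Option (Fin b))
    (i : Fin a) (j : Fin b) : Prop :=
  μ i = some j ∧ ∀ j', ν i = some j' → Pm i j' < Pm i j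

lemma mar_step {a b : ℕ} {Pm : Fin a → Fin b → ℝ} {Pw : Fin b → Fin a → ℝ}
    (hstrictm : ∀ i, Function.Injective (Pm i))
    (hstrictw : ∀ j, Function.Injective (Pw j))
    {μ ν : Fin a → Option (Fin b)}
    (hμ : MarriageStable Pm Pw μ) (hν : MarriageStable Pm Pw ν)
    {i : Fin a} {j : Fin b} (h : MarC Pm μ ν i j) :
    ∃ i' j', MarC Pm μ ν i' j' ∧ ν i' = some j := by
  have hνij : ν i ≠ some j := fun hc => lt_irrefl _ (h.2 j hc)
  -- first half-step: find j's partner under ν, whom j prefers to i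
  have step1 : ∃ i', ν i' = some j ∧ Pw j i < Pw j i' := by
    by_contra hcon
    push_neg at hcon
    exact hν.2.2 ⟨i, j, hνij, h.2, fun _ => (hμ.2.1 i j h.1).1,
      fun i' hi' => lt_of_le_of_ne (hcon i' hi')
        (fun he => hνij (hstrictw j he ▸ hi')),
      fun _ => (hμ.2.1 i j h.1).2⟩
  obtain ⟨i', hi'ν, hlt⟩ := step1
  have hii' : i' ≠ i := fun he => hνij (he ▸ hi'ν)
  have hμi' : μ i' ≠ some j := fun hc => hii' (hμ.1 i' i j hc h.1)
  -- second half-step: find i''s partner under μ, whom i' prefers to j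
  have step2 : ∃ j', μ i' = some j' ∧ Pm i' j < Pm i' j' := by
    by_contra hcon
    push_neg at hcon
    exact hμ.2.2 ⟨i', j, hμi',
      fun j' hj' => lt_of_le_of_ne (hcon j' hj')
        (fun he => hμi' ((hstrictm i' he) ▸ hj')),
      fun _ => (hν.2.1 i' j hi'ν).1,
      fun i'' hi'' => (hμ.1 i'' i j hi'' h.1) ▸ hlt,
      fun hall => absurd h.1 (hall i)⟩
  obtain ⟨j', hj', hlt'⟩ := step2
  exact ⟨i', j', ⟨hj', fun j'' hj'' => by
    rw [hi'ν] at hj''; injection hj'' with he; rw [← he]; exact hlt'⟩, hi'ν⟩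

/-- Key contradiction lemma: no chain can start at a pair `(i0, j0)` where
`i0`'s ν-partner (if any) is unmatched under μ. -/
lemma mar_gen {a b : ℕ} {Pm : Fin a → Fin b → ℝ} {Pw : Fin b → Fin a → ℝ}
    (hstrictm : ∀ i, Function.Injective (Pm i))
    (hstrictw : ∀ j, Function.Injective (Pw j))
    {μ ν : Fin a → Option (Fin b)}
    (hμ : MarriageStable Pm Pw μ) (hν : MarriageStable Pm Pw ν)
    {i0 : Fin a} {j0 : Fin b} (h0 : MarC Pm μ ν i0 j0)
    (hns : ∀ j, ν i0 = some j → ∀ i, μ i ≠ some j) : False := by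
  classical
  set T := {p : Fin a × Fin b // MarC Pm μ ν p.1 p.2} with hT
  have hstep : ∀ t : T, ∃ t' : T, ν t'.1.1 = some t.1.2 := by
    rintro ⟨⟨i, j⟩, hij⟩
    obtain ⟨i', j', hC, hν'⟩ := mar_step hstrictm hstrictw hμ hν hij
    exact ⟨⟨(i', j'), hC⟩, hν'⟩
  let g : T → T := fun t => (hstep t).choose
  have hg : ∀ t : T, ν (g t).1.1 = some t.1.2 := fun t => (hstep t).choose_spec
  let t0 : T := ⟨(i0, j0), h0⟩
  let f : ℕ → T := fun n => g^[n] t0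
  have hf0 : f 0 = t0 := rfl
  have hfs : ∀ n, f (n + 1) = g (f n) := fun n => Function.iterate_succ_apply' g n t0
  have hlink : ∀ n, ν (f (n + 1)).1.1 = some (f n).1.2 := fun n => by
    rw [hfs]; exact hg (f n)
  have hmatch : ∀ n, μ (f n).1.1 = some (f n).1.2 := fun n => (f n).2.1
  -- no return to i0
  have hbase : ∀ n, (f (n + 1)).1.1 ≠ i0 := by
    intro n he
    have := hlink n
    rw [he] at this
    exact hns _ this _ (hmatch n)
  -- backward determinism
  have hback : ∀ n m, (f (n + 1)).1.1 = (f (m + 1)).1.1 → (f n).1.1 = (f m).1.1 := by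
    intro n m he
    have h1 := hlink n
    have h2 := hlink m
    rw [he, h2] at h1
    injection h1 with hj
    have h3 : μ (f n).1.1 = some (f m).1.2 := by rw [hmatch n, ← hj]
    exact hμ.1 _ _ _ h3 (hmatch m)
  have hback' : ∀ n m, (f (n + 1)).1.1 = (f (m + 1)).1.1 → (f n).1.1 = (f m).1.1 := hback
  have hinj : Function.Injective (fun n => (f n).1.1) := by
    intro n m
    induction n generalizing m with
    | zero =>
      intro he
      cases m with
      | zero => rfl
      | succ k => exact absurd he.symm (hbase k)
    | succ l ih =>
      intro he
      cases m with
      | zero => exact absurd he (hbase l)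
      | succ k => exact congrArg Nat.succ (ih (hback l k he))
  exact (Finite.exists_ne_map_eq_of_infinite (fun n => (f n).1.1)).elim
    (fun n hn => hn.elim (fun m ⟨hne, heq⟩ => hne (hinj heq)))

/-- in the marriage model with strict preferences, the set of
unmatched agents is the same in any two stable matchings. -/
theorem stmt15 {a b : ℕ} (Pm : Fin a → Fin b → ℝ) (Pw : Fin b → Fin a → ℝ)
    (hstrictm : ∀ i, Function.Injective (Pm i))
    (hstrictw : ∀ j, Function.Injective (Pw j))
    (μ μ' : Fin a → Option (Fin b))
    (h : MarriageStable Pm Pw μ) (h' : MarriageStable Pm Pw μ') :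
    (∀ i, μ i = none ↔ μ' i = none) ∧
    (∀ j, (∀ i, μ i ≠ some j) ↔ (∀ i, μ' i ≠ some j)) := by
  -- men: matched in one ⇒ matched in the other
  have men : ∀ (ρ σ : Fin a → Option (Fin b)), MarriageStable Pm Pw ρ →
      MarriageStable Pm Pw σ → ∀ i, σ i = none → ρ i = none := by
    intro ρ σ hρ hσ i hi
    cases hρi : ρ i with
    | none => rfl
    | some j =>
      exact absurd (mar_gen hstrictm hstrictw hρ hσ
        ⟨hρi, fun j' hj' => by rw [hi] at hj'; exact absurd hj' (by simp)⟩
        (fun j hj => by rw [hi] at hj; exact absurd hj (by simp))) not_false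
  -- women: matched in one ⇒ matched in the other
  have women : ∀ (ρ σ : Fin a → Option (Fin b)), MarriageStable Pm Pw ρ →
      MarriageStable Pm Pw σ → ∀ j, (∀ i, σ i ≠ some j) → ∀ i, ρ i ≠ some j := by
    intro ρ σ hρ hσ j0 hall i0 hρi0
    -- (i0, j0) must not block σ, so i0 has a σ-partner he prefers to j0
    have step0 : ∃ j1, σ i0 = some j1 ∧ Pm i0 j0 < Pm i0 j1 := by
      by_contra hcon
      push_neg at hcon
      refine hσ.2.2 ⟨i0, j0, hall i0, ?_, fun _ => (hρ.2.1 i0 j0 hρi0).1,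
        fun i' hi' => absurd hi' (hall i'), fun _ => (hρ.2.1 i0 j0 hρi0).2⟩
      intro j' hj'
      exact lt_of_le_of_ne (hcon j' hj')
        (fun he => (hall i0) ((hstrictm i0 he) ▸ hj'))
    obtain ⟨j1, hσi0, hlt⟩ := step0
    refine mar_gen hstrictm hstrictw hσ hρ (i0 := i0) (j0 := j1)
      ⟨hσi0, fun j' hj' => ?_⟩ (fun j hj i hi => ?_)
    · rw [hρi0] at hj'; injection hj' with he; rw [he] at hlt; exact hlt
    · rw [hρi0] at hj; injection hj with he; exact hall i (he ▸ hi)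
  constructor
  · intro i
    exact ⟨fun hi => men μ' μ h' h i hi, fun hi => men μ μ' h h' i hi⟩
  · intro j
    exact ⟨fun hj => women μ' μ h' h j hj, fun hj => women μ μ' h h' j hj⟩
end
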